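/- arXiv:1408.6737 — 11 statements merged into one kernel-verified Lean document; each statement's English description precedes it below -/
import Mathlib

section
/- Let A be an n×n real matrix and θ>0 such that AᵀA ≤ (1-θ)·I in the sense of quadratic forms. Then there exists a vector ξ ∈ ℝⁿ such that for every ζ ∈ ℝⁿ one has (1-θ)|ζ·e₁|² ≤ (AᵀA + ξ⊗ξ)ζ·ζ ≤ (1-θ)|ζ|². -/
open Matrix

set_option maxHeartbeats 1600000 in
theorem stmt0 (n : ℕ) (A : Matrix (Fin (n+1)) (Fin (n+1)) ℝ) (θ : ℝ) (hθ : 0 < θ)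
    (hA : ∀ w : Fin (n+1) → ℝ, (Aᵀ * A).mulVec w ⬝ᵥ w ≤ (1 - θ) * (w ⬝ᵥ w)) :
    ∃ ξ : Fin (n+1) → ℝ, ∀ ζ : Fin (n+1) → ℝ,
      (1 - θ) * (ζ 0) ^ 2 ≤ ((Aᵀ * A + vecMulVec ξ ξ).mulVec ζ) ⬝ᵥ ζ ∧
      ((Aᵀ * A + vecMulVec ξ ξ).mulVec ζ) ⬝ᵥ ζ ≤ (1 - θ) * (ζ ⬝ᵥ ζ) := by
  have hBform : ∀ w : Fin (n+1) → ℝ, (Aᵀ * A).mulVec w ⬝ᵥ w = A.mulVec w ⬝ᵥ A.mulVec w := by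
    intro w
    rw [← Matrix.mulVec_mulVec, Matrix.mulVec_transpose, ← Matrix.dotProduct_mulVec]
  have hQform : ∀ (ξ ζ : Fin (n+1) → ℝ),
      ((Aᵀ * A + vecMulVec ξ ξ).mulVec ζ) ⬝ᵥ ζ
        = A.mulVec ζ ⬝ᵥ A.mulVec ζ + (ξ ⬝ᵥ ζ)^2 := by
    intro ξ ζ
    rw [Matrix.add_mulVec, add_dotProduct, hBform]
    congr 1
    simp only [vecMulVec, mulVec, dotProduct, Matrix.of_apply, sq, Finset.sum_mul, Finset.mul_sum]
    rw [Finset.sum_comm]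
    congr 1; ext i; congr 1; ext j; ring
  set s := 1 - θ with hs
  have hA' : ∀ w : Fin (n+1) → ℝ, A.mulVec w ⬝ᵥ A.mulVec w ≤ s * (w ⬝ᵥ w) := by
    intro w; rw [← hBform]; exact hA w
  have hself : ∀ v : Fin (n+1) → ℝ, 0 ≤ v ⬝ᵥ v := by
    intro v; exact Finset.sum_nonneg fun i _ => mul_self_nonneg _
  set e : Fin (n+1) → ℝ := Pi.single 0 1 with he
  have hee : e ⬝ᵥ e = (1:ℝ) := by simp [he]
  have heζ : ∀ ζ : Fin (n+1) → ℝ, e ⬝ᵥ ζ = ζ 0 := by intro ζ; simp [he]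
  have hζe : ∀ ζ : Fin (n+1) → ℝ, ζ ⬝ᵥ e = ζ 0 := by intro ζ; simp [he]
  have he0 : e 0 = 1 := by rw [he]; simp
  set a : Fin (n+1) → ℝ := A.mulVec e with ha
  clear_value s e a
  obtain ⟨b₁, hb₁⟩ : ∃ x : ℝ, a ⬝ᵥ a = x := ⟨_, rfl⟩
  have hb₁0 : 0 ≤ b₁ := hb₁ ▸ hself a
  obtain ⟨m, hmdef⟩ : ∃ x : ℝ, s - b₁ = x := ⟨_, rfl⟩
  have hm0 : 0 ≤ m := by
    have h := hA' e; rw [hee, ← ha, hb₁] at h; rw [← hmdef]; linarith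
  have hs0 : 0 ≤ s := by rw [← hmdef] at hm0; linarith
  have CSdot : ∀ u v : Fin (n+1) → ℝ, (u ⬝ᵥ v)^2 ≤ (u ⬝ᵥ u) * (v ⬝ᵥ v) := by
    intro u v
    simpa [dotProduct, sq] using Finset.sum_mul_sq_le_sq_mul_sq Finset.univ u v
  have CSM : ∀ ζ : Fin (n+1) → ℝ,
      (s * ζ 0 - a ⬝ᵥ A.mulVec ζ)^2
        ≤ m * (s * (ζ ⬝ᵥ ζ) - A.mulVec ζ ⬝ᵥ A.mulVec ζ) := by
    intro ζ
    have key : ∀ x : ℝ, 0 ≤ m * (x*x) + (2*(s * ζ 0 - a ⬝ᵥ A.mulVec ζ)) * x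
        + (s * (ζ ⬝ᵥ ζ) - A.mulVec ζ ⬝ᵥ A.mulVec ζ) := by
      intro x
      have h := hA' (ζ + x • e)
      have e1 : A.mulVec (ζ + x • e) = A.mulVec ζ + x • a := by
        rw [Matrix.mulVec_add, Matrix.mulVec_smul, ← ha]
      rw [e1] at h
      have d1 : (ζ + x • e) ⬝ᵥ (ζ + x • e) = ζ ⬝ᵥ ζ + 2 * x * ζ 0 + x * x := by
        simp only [add_dotProduct, dotProduct_add, smul_dotProduct,
          dotProduct_smul, hee, heζ, hζe, smul_eq_mul, Pi.add_apply, Pi.smul_apply, he0]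
        ring
      have d2 : (A.mulVec ζ + x • a) ⬝ᵥ (A.mulVec ζ + x • a)
          = A.mulVec ζ ⬝ᵥ A.mulVec ζ + 2 * x * (a ⬝ᵥ A.mulVec ζ) + x * x * b₁ := by
        simp only [add_dotProduct, dotProduct_add, smul_dotProduct,
          dotProduct_smul, smul_eq_mul, dotProduct_comm (A.mulVec ζ) a, hb₁]
        ring
      rw [d1, d2] at h
      rw [← hmdef]
      nlinarith [h]
    have hd := discrim_le_zero key
    rw [discrim] at hd
    nlinarith [hd]
  rcases hm0.eq_or_lt with hm | hm
  · -- m = 0, take ξ = 0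
    refine ⟨0, fun ζ => ?_⟩
    rw [hQform]
    obtain ⟨q, hq⟩ : ∃ x : ℝ, A.mulVec ζ ⬝ᵥ A.mulVec ζ = x := ⟨_, rfl⟩
    obtain ⟨Z, hZ⟩ : ∃ x : ℝ, ζ ⬝ᵥ ζ = x := ⟨_, rfl⟩
    obtain ⟨t, ht⟩ : ∃ x : ℝ, a ⬝ᵥ A.mulVec ζ = x := ⟨_, rfl⟩
    have hq0 : 0 ≤ q := hq ▸ hself _
    have hCSM := CSM ζ
    rw [ht, hq, hZ] at hCSM
    have hCSB := CSdot a (A.mulVec ζ)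
    rw [ht, hq, hb₁] at hCSB
    have hz : ((0 : Fin (n+1) → ℝ) ⬝ᵥ ζ) = 0 := zero_dotProduct ζ
    rw [hz, hq, hZ]
    have hAζ := hA' ζ; rw [hq, hZ] at hAζ
    have hts : s * ζ 0 = t := by nlinarith [sq_nonneg (s * ζ 0 - t), hCSM, hm]
    have hb₁s : b₁ = s := by linarith [hmdef, hm]
    constructor
    · rcases hs0.eq_or_lt with hs1 | hs1
      · rw [← hs1]; simpa using hq0
      · have h6 : s * (s * ζ 0 ^ 2) ≤ s * q := by
          have : (s * ζ 0)^2 ≤ s * q := by rw [hts]; rw [hb₁s] at hCSB; exact hCSB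
          nlinarith [this]
        have h7 := le_of_mul_le_mul_left h6 hs1
        simpa using h7.trans (by linarith)
    · simpa using hAζ
  · -- m > 0
    refine ⟨(Real.sqrt m)⁻¹ • (s • e - Aᵀ.mulVec a), fun ζ => ?_⟩
    rw [hQform]
    obtain ⟨q, hq⟩ : ∃ x : ℝ, A.mulVec ζ ⬝ᵥ A.mulVec ζ = x := ⟨_, rfl⟩
    obtain ⟨Z, hZ⟩ : ∃ x : ℝ, ζ ⬝ᵥ ζ = x := ⟨_, rfl⟩
    obtain ⟨t, ht⟩ : ∃ x : ℝ, a ⬝ᵥ A.mulVec ζ = x := ⟨_, rfl⟩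
    have hq0 : 0 ≤ q := hq ▸ hself _
    have hCSM := CSM ζ
    rw [ht, hq, hZ] at hCSM
    have hCSB := CSdot a (A.mulVec ζ)
    rw [ht, hq, hb₁] at hCSB
    have hξζ : ((Real.sqrt m)⁻¹ • (s • e - Aᵀ.mulVec a)) ⬝ᵥ ζ
        = (Real.sqrt m)⁻¹ * (s * ζ 0 - t) := by
      rw [smul_dotProduct, sub_dotProduct, smul_dotProduct, heζ,
        Matrix.mulVec_transpose, ← Matrix.dotProduct_mulVec, smul_eq_mul, smul_eq_mul, ht]
    rw [hξζ, hq, hZ]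
    have hsq : ((Real.sqrt m)⁻¹ * (s * ζ 0 - t))^2 = (s * ζ 0 - t)^2 / m := by
      rw [mul_pow, ← Real.sqrt_inv, Real.sq_sqrt (by positivity), inv_mul_eq_div]
    rw [hsq]
    constructor
    · have key : (s * ζ 0 ^ 2 - q) * m ≤ (s * ζ 0 - t)^2 := by
        rcases hb₁0.eq_or_lt with hb | hb
        · have ht0 : t = 0 := by nlinarith [hCSB, sq_nonneg t]
          have hms : m = s := by rw [← hmdef, ← hb]; ring
          rw [ht0, hms]
          nlinarith [mul_nonneg hs0 hq0]
        · have h1 : 0 ≤ (s - b₁) * (b₁*q - t^2) :=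
            mul_nonneg (by linarith [hmdef, hm]) (by linarith)
          have h2 : 0 ≤ s * (t - b₁ * ζ 0)^2 := mul_nonneg hs0 (sq_nonneg _)
          have hid : b₁ * (m*q + (s*ζ 0 - t)^2 - s*m*ζ 0^2)
              = (s - b₁)*(b₁*q - t^2) + s*(t - b₁*ζ 0)^2 := by
            rw [← hmdef]; ring
          have h3 : 0 ≤ b₁ * (m*q + (s*ζ 0 - t)^2 - s*m*ζ 0^2) := by
            rw [hid]; exact add_nonneg h1 h2
          have hΔ : 0 ≤ m*q + (s*ζ 0 - t)^2 - s*m*ζ 0^2 := by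
            by_contra hc
            push_neg at hc
            nlinarith [h3, hb]
          nlinarith [hΔ]
      have h4 : s * ζ 0 ^ 2 - q ≤ (s * ζ 0 - t)^2 / m := (le_div_iff₀ hm).mpr key
      linarith
    · have hAζ := hA' ζ; rw [hq, hZ] at hAζ
      have h5 : (s * ζ 0 - t)^2 / m ≤ s * Z - q := by
        rw [div_le_iff₀ hm]
        nlinarith [hCSM]
      linarith
end

section
/- Let T ⊂ ℝⁿ be a simplex (the convex hull of n+1 affinely independent points) with barycenter x̄, and let r₁, r₂ > 0 satisfy B(x̄,r₁) ⊂ T ⊂ B(x̄,r₂). For every C² map u : T → ℝⁿ, the affine interpolation ū of u at the vertices of T satisfies Lip(u - ū) ≤ (4 r₂²/r₁) · sup over T of the operator norm of the Hessian of u. -/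
/-!
Writing `ū = A + b`, it suffices to bound `‖Du(p) - A‖` uniformly on `T` and apply the mean value
inequality. Fix `p ∈ T`. Since `Du` is `H`-Lipschitz and `diam T ≤ 2 r₂`, the first-order Taylor
polynomial of `u` at `p` differs from `u` by at most `4 H r₂²` on `T`, in particular at the vertices,
where `u = ū`. So the affine map `y ↦ u p + Du(p) (y - p) - ū y`, whose linear part is
`Du(p) - A`, is bounded by `4 H r₂²` at the vertices, hence on their convex hull `T`, hence on
the ball `B(x̄, r₁)`; and an affine map bounded by `M` on a ball of radius `r₁` has linear part of
norm at most `M / r₁`.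
-/

open Metric

variable {E F : Type*} [NormedAddCommGroup E] [NormedSpace ℝ E]
  [NormedAddCommGroup F] [NormedSpace ℝ F]

theorem ContinuousLinearMap.opNorm_le_of_norm_add_le_on_closedBall (L : E →L[ℝ] F) (c : F)
    {z : E} {r M : ℝ} (hr : 0 < r) (h : ∀ y ∈ closedBall z r, ‖L y + c‖ ≤ M) :
    ‖L‖ ≤ M / r := by
  have hM : 0 ≤ M := (norm_nonneg _).trans (h z (mem_closedBall_self hr.le))
  refine L.opNorm_le_of_unit_norm (div_nonneg hM hr.le) fun e he => ?_
  have hplus := h (z + r • e) (by simp [norm_smul, he, abs_of_pos hr])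
  have hminus := h (z - r • e) (by simp [norm_smul, he, abs_of_pos hr])
  have htwice : (2 * r) • L e = (L (z + r • e) + c) - (L (z - r • e) + c) := by
    simp only [map_add, map_sub, map_smul]
    module
  have : 2 * r * ‖L e‖ ≤ 2 * M := by
    calc 2 * r * ‖L e‖ = ‖(2 * r) • L e‖ := by rw [norm_smul, Real.norm_of_nonneg (by positivity)]
      _ ≤ ‖L (z + r • e) + c‖ + ‖L (z - r • e) + c‖ := htwice ▸ norm_sub_le _ _
      _ ≤ 2 * M := by linarith
  rw [le_div_iff₀ hr]
  linarith

theorem convexHull_subset_setOf_norm_add_le (L : E →ₗ[ℝ] F) (c : F) {s : Set E} {M : ℝ}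
    (h : ∀ v ∈ s, ‖L v + c‖ ≤ M) : convexHull ℝ s ⊆ {y | ‖L y + c‖ ≤ M} := by
  refine convexHull_min h ?_
  convert (convex_closedBall (-c) M).linear_preimage L using 1
  ext y
  simp [dist_eq_norm]

theorem Convex.norm_fderivWithin_sub_le_of_norm_iteratedFDerivWithin_two_le {s : Set E}
    (hs : Convex ℝ s) (hs' : UniqueDiffOn ℝ s) {u : E → F} (hu : ContDiffOn ℝ 2 u s) {H : ℝ}
    (hH : ∀ z ∈ s, ‖iteratedFDerivWithin ℝ 2 u s z‖ ≤ H) {p q : E} (hp : p ∈ s) (hq : q ∈ s) :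
    ‖fderivWithin ℝ u s p - fderivWithin ℝ u s q‖ ≤ H * ‖p - q‖ := by
  rw [← dist_eq_norm, ← dist_iteratedFDerivWithin_one u u (hs' p hp) (hs' q hq), dist_eq_norm]
  refine hs.norm_image_sub_le_of_norm_fderivWithin_le
    (hu.differentiableOn_iteratedFDerivWithin (by norm_num) hs') (fun z hz => ?_) hq hp
  rw [norm_fderivWithin_iteratedFDerivWithin]
  exact hH z hz

theorem norm_fderivWithin_sub_le_of_interpolates {V s : Set E} (hs : s = convexHull ℝ V)
    {u : E → F} (hu : DifferentiableOn ℝ u s) {C D : ℝ}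
    (hosc : ∀ p ∈ s, ∀ q ∈ s, ‖fderivWithin ℝ u s p - fderivWithin ℝ u s q‖ ≤ C)
    (hdiam : ∀ p ∈ s, ∀ q ∈ s, ‖p - q‖ ≤ D) {z : E} {r : ℝ} (hr : 0 < r)
    (hball : closedBall z r ⊆ s) {A : E →L[ℝ] F} {b : F} (hinterp : ∀ v ∈ V, A v + b = u v)
    {p : E} (hp : p ∈ s) :
    ‖fderivWithin ℝ u s p - A‖ ≤ C * D / r := by
  set L := fderivWithin ℝ u s p - A
  set c := u p - fderivWithin ℝ u s p p - b
  have hC : 0 ≤ C := (norm_nonneg _).trans (hosc p hp p hp)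
  have hconv : Convex ℝ s := hs ▸ convex_convexHull ℝ V
  have hvert : ∀ v ∈ V, ‖L v + c‖ ≤ C * D := by
    intro v hv
    have hvs : v ∈ s := hs ▸ subset_convexHull ℝ V hv
    have htaylor : ‖u v - u p - fderivWithin ℝ u s p (v - p)‖ ≤ C * ‖v - p‖ :=
      hconv.norm_image_sub_le_of_norm_fderivWithin_le' hu (fun y hy => hosc y hy p hp) hp hvs
    have hLc : L v + c = -(u v - u p - fderivWithin ℝ u s p (v - p)) := by
      rw [← hinterp v hv]
      simp only [L, c, sub_apply, map_sub]
      abel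
    rw [hLc, norm_neg]
    exact htaylor.trans (mul_le_mul_of_nonneg_left (hdiam v hvs p hp) hC)
  exact L.opNorm_le_of_norm_add_le_on_closedBall c hr fun y (hy : y ∈ closedBall z r) =>
    convexHull_subset_setOf_norm_add_le L.toLinearMap c hvert (hs ▸ hball hy)

theorem stmt2_general (n : ℕ) (x : Fin (n+1) → EuclideanSpace ℝ (Fin n))
    (T : Set (EuclideanSpace ℝ (Fin n))) (hT : T = convexHull ℝ (Set.range x))
    (xbar : EuclideanSpace ℝ (Fin n))
    (r₁ r₂ : ℝ) (hr₁ : 0 < r₁)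
    (hball₁ : ball xbar r₁ ⊆ T) (hball₂ : T ⊆ ball xbar r₂)
    (u : EuclideanSpace ℝ (Fin n) → EuclideanSpace ℝ (Fin n))
    (hu : ContDiffOn ℝ 2 u T)
    (H : ℝ) (hH : ∀ p ∈ T, ‖iteratedFDerivWithin ℝ 2 u T p‖ ≤ H)
    (A : EuclideanSpace ℝ (Fin n) →L[ℝ] EuclideanSpace ℝ (Fin n))
    (b : EuclideanSpace ℝ (Fin n))
    (hinterp : ∀ i, A (x i) + b = u (x i)) :
    ∀ p ∈ T, ∀ q ∈ T,
      ‖(u p - (A p + b)) - (u q - (A q + b))‖ ≤ (4 * r₂ ^ 2 / r₁) * H * ‖p - q‖ := by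
  have hconv : Convex ℝ T := hT ▸ convex_convexHull ℝ _
  have hclosedBall : closedBall xbar r₁ ⊆ T := by
    have hclosed : IsClosed T := hT ▸ ((Set.finite_range x).isCompact_convexHull (𝕜 := ℝ)).isClosed
    rw [← closure_ball xbar hr₁.ne']
    exact hclosed.closure_subset_iff.mpr hball₁
  have hH0 : 0 ≤ H := (norm_nonneg _).trans (hH xbar (hball₁ (mem_ball_self hr₁)))
  have hud : UniqueDiffOn ℝ T := uniqueDiffOn_convex hconv
    ⟨xbar, mem_interior.mpr ⟨_, hball₁, isOpen_ball, mem_ball_self hr₁⟩⟩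
  have hdiam : ∀ p ∈ T, ∀ q ∈ T, ‖p - q‖ ≤ 2 * r₂ := fun p hp q hq => by
    rw [← dist_eq_norm, two_mul]
    exact (dist_triangle_right p q xbar).trans
      (add_le_add (mem_ball.1 (hball₂ hp)).le (mem_ball.1 (hball₂ hq)).le)
  have hosc : ∀ p ∈ T, ∀ q ∈ T,
      ‖fderivWithin ℝ u T p - fderivWithin ℝ u T q‖ ≤ H * (2 * r₂) := fun p hp q hq =>
    (hconv.norm_fderivWithin_sub_le_of_norm_iteratedFDerivWithin_two_le hud hu hH hp hq).trans
      (mul_le_mul_of_nonneg_left (hdiam p hp q hq) hH0)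
  have hderiv : ∀ z ∈ T, ‖fderivWithin ℝ u T z - A‖ ≤ H * (2 * r₂) * (2 * r₂) / r₁ :=
    fun z hz => norm_fderivWithin_sub_le_of_interpolates hT (hu.differentiableOn two_ne_zero)
      hosc hdiam hr₁ hclosedBall (by rintro _ ⟨i, rfl⟩; exact hinterp i) hz
  intro p hp q hq
  calc ‖(u p - (A p + b)) - (u q - (A q + b))‖ = ‖u p - u q - A (p - q)‖ := by
        rw [map_sub]; congr 1; abel
    _ ≤ H * (2 * r₂) * (2 * r₂) / r₁ * ‖p - q‖ :=
        hconv.norm_image_sub_le_of_norm_fderivWithin_le' (hu.differentiableOn two_ne_zero)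
          hderiv hq hp
    _ = (4 * r₂ ^ 2 / r₁) * H * ‖p - q‖ := by ring

theorem stmt2 (n : ℕ) (x : Fin (n+1) → EuclideanSpace ℝ (Fin n))
    (hx : AffineIndependent ℝ x)
    (T : Set (EuclideanSpace ℝ (Fin n))) (hT : T = convexHull ℝ (Set.range x))
    (xbar : EuclideanSpace ℝ (Fin n)) (hxbar : xbar = ((n : ℝ) + 1)⁻¹ • ∑ i, x i)
    (r₁ r₂ : ℝ) (hr₁ : 0 < r₁) (hr₂ : 0 < r₂)
    (hball₁ : ball xbar r₁ ⊆ T) (hball₂ : T ⊆ ball xbar r₂)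
    (u : EuclideanSpace ℝ (Fin n) → EuclideanSpace ℝ (Fin n))
    (hu : ContDiffOn ℝ 2 u T)
    (H : ℝ) (hH : ∀ p ∈ T, ‖iteratedFDerivWithin ℝ 2 u T p‖ ≤ H)
    (A : EuclideanSpace ℝ (Fin n) →L[ℝ] EuclideanSpace ℝ (Fin n))
    (b : EuclideanSpace ℝ (Fin n))
    (hinterp : ∀ i, A (x i) + b = u (x i)) :
    ∀ p ∈ T, ∀ q ∈ T,
      ‖(u p - (A p + b)) - (u q - (A q + b))‖ ≤ (4 * r₂ ^ 2 / r₁) * H * ‖p - q‖ :=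
  stmt2_general n x T hT xbar r₁ r₂ hr₁ hball₁ hball₂ u hu H hH A b hinterp
end

section
/- Let T ⊂ ℝⁿ be a simplex with barycenter x̄ and B(x̄,r₁) ⊂ T ⊂ B(x̄,r₂). For any Lipschitz map u : T → ℝⁿ, any matrix B ∈ ℝ^{n×n}, and A the gradient of the affine interpolation of u at the vertices of T, one has |B - A| ≤ (2 r₂/r₁) · Lip(u - L_B), where L_B(x) = Bx and |·| denotes the operator norm. -/
open Metric

/-! The linear map `C = A - B` agrees at the vertices, up to the constant `b`, with `u - L_B`, so
its oscillation over the vertices is at most `L · diam T ≤ 2 r₂ L`. Being affine, `C` has the same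
oscillation bound on the whole simplex `T`, hence on `x̄ + closedBall 0 r₁ ⊆ T`; comparing with the
value at `x̄` bounds `‖C z‖` by `2 r₂ L` for `‖z‖ ≤ r₁`, i.e. `‖C‖ ≤ 2 r₂ L / r₁`. -/

theorem AffineMap.norm_sub_le_of_mem_convexHull {E F : Type*} [AddCommGroup E] [Module ℝ E]
    [NormedAddCommGroup F] [NormedSpace ℝ F] (f : E →ᵃ[ℝ] F) {s : Set E} {M : ℝ}
    (h : ∀ a ∈ s, ∀ b ∈ s, ‖f a - f b‖ ≤ M) {p q : E}
    (hp : p ∈ convexHull ℝ s) (hq : q ∈ convexHull ℝ s) : ‖f p - f q‖ ≤ M := by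
  have hfp : f p ∈ convexHull ℝ (f '' s) := f.image_convexHull s ▸ Set.mem_image_of_mem f hp
  have hfq : f q ∈ convexHull ℝ (f '' s) := f.image_convexHull s ▸ Set.mem_image_of_mem f hq
  obtain ⟨_, ⟨a, ha, rfl⟩, _, ⟨b, hb, rfl⟩, hle⟩ := convexHull_exists_dist_ge2 hfp hfq
  rw [← dist_eq_norm]
  exact hle.trans (dist_eq_norm (f a) (f b) ▸ h a ha b hb)

theorem ContinuousLinearMap.opNorm_le_of_closedBall_bound {E F : Type*}
    [NormedAddCommGroup E] [NormedSpace ℝ E] [NormedAddCommGroup F] [NormedSpace ℝ F]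
    (f : E →L[ℝ] F) {r M : ℝ} (hr : 0 < r) (h : ∀ z ∈ closedBall (0 : E) r, ‖f z‖ ≤ M) :
    ‖f‖ ≤ M / r := by
  have hM : 0 ≤ M := (norm_nonneg _).trans (h 0 (mem_closedBall_self hr.le))
  refine f.opNorm_le_of_unit_norm (div_nonneg hM hr.le) fun x hx => ?_
  have hrx : r • x ∈ closedBall (0 : E) r := by
    rw [mem_closedBall_zero_iff, norm_smul, hx, Real.norm_of_nonneg hr.le, mul_one]
  have := h _ hrx
  rw [map_smul, norm_smul, Real.norm_of_nonneg hr.le] at this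
  rwa [le_div_iff₀ hr, mul_comm]

theorem stmt3_general (n : ℕ) (x : Fin (n+1) → EuclideanSpace ℝ (Fin n))
    (T : Set (EuclideanSpace ℝ (Fin n))) (hT : T = convexHull ℝ (Set.range x))
    (xbar : EuclideanSpace ℝ (Fin n))
    (r₁ r₂ : ℝ) (hr₁ : 0 < r₁)
    (hball₁ : ball xbar r₁ ⊆ T) (hball₂ : T ⊆ ball xbar r₂)
    (u : EuclideanSpace ℝ (Fin n) → EuclideanSpace ℝ (Fin n))
    (A B : EuclideanSpace ℝ (Fin n) →L[ℝ] EuclideanSpace ℝ (Fin n))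
    (b : EuclideanSpace ℝ (Fin n))
    (hinterp : ∀ i, A (x i) + b = u (x i))
    (L : ℝ) (hL0 : 0 ≤ L)
    (hL : ∀ p ∈ T, ∀ q ∈ T, ‖(u p - B p) - (u q - B q)‖ ≤ L * ‖p - q‖) :
    ‖A - B‖ ≤ (2 * r₂ / r₁) * L := by
  set C := A - B
  have hxT (i) : x i ∈ T := hT ▸ subset_convexHull ℝ _ ⟨i, rfl⟩
  have hdiam : ∀ p ∈ T, ∀ q ∈ T, ‖p - q‖ ≤ 2 * r₂ := fun p hp q hq => by
    have := dist_triangle_right p q xbar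
    rw [← dist_eq_norm]
    linarith [mem_ball.1 (hball₂ hp), mem_ball.1 (hball₂ hq)]
  have hvertex : ∀ y ∈ Set.range x, ∀ y' ∈ Set.range x, ‖C y - C y'‖ ≤ 2 * r₂ * L := by
    rintro _ ⟨i, rfl⟩ _ ⟨j, rfl⟩
    have hC : C (x i) - C (x j) = (u (x i) - B (x i)) - (u (x j) - B (x j)) := by
      simp only [C, sub_apply, ← hinterp]
      abel
    rw [hC, mul_comm]
    exact (hL _ (hxT i) _ (hxT j)).trans
      (mul_le_mul_of_nonneg_left (hdiam _ (hxT i) _ (hxT j)) hL0)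
  have hsimplex : ∀ p ∈ T, ∀ q ∈ T, ‖C p - C q‖ ≤ 2 * r₂ * L := fun p hp q hq => by
    subst hT
    exact AffineMap.norm_sub_le_of_mem_convexHull
      (C : EuclideanSpace ℝ (Fin n) →ₗ[ℝ] EuclideanSpace ℝ (Fin n)).toAffineMap hvertex hp hq
  have hclosedBall : closedBall xbar r₁ ⊆ T := by
    rw [← closure_ball xbar hr₁.ne', hT]
    exact closure_minimal (hT ▸ hball₁) ((Set.finite_range x).isClosed_convexHull ℝ)
  have hC := C.opNorm_le_of_closedBall_bound hr₁ fun z hz => by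
    have hxz : xbar + z ∈ closedBall xbar r₁ := by
      simpa [dist_eq_norm] using hz
    rw [show C z = C (xbar + z) - C xbar by rw [map_add]; abel]
    exact hsimplex _ (hclosedBall hxz) _ (hclosedBall (mem_closedBall_self hr₁.le))
  calc ‖C‖ ≤ 2 * r₂ * L / r₁ := hC
    _ = 2 * r₂ / r₁ * L := by ring

theorem stmt3 (n : ℕ) (x : Fin (n+1) → EuclideanSpace ℝ (Fin n))
    (hx : AffineIndependent ℝ x)
    (T : Set (EuclideanSpace ℝ (Fin n))) (hT : T = convexHull ℝ (Set.range x))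
    (xbar : EuclideanSpace ℝ (Fin n)) (hxbar : xbar = ((n : ℝ) + 1)⁻¹ • ∑ i, x i)
    (r₁ r₂ : ℝ) (hr₁ : 0 < r₁) (hr₂ : 0 < r₂)
    (hball₁ : ball xbar r₁ ⊆ T) (hball₂ : T ⊆ ball xbar r₂)
    (u : EuclideanSpace ℝ (Fin n) → EuclideanSpace ℝ (Fin n))
    (A B : EuclideanSpace ℝ (Fin n) →L[ℝ] EuclideanSpace ℝ (Fin n))
    (b : EuclideanSpace ℝ (Fin n))
    (hinterp : ∀ i, A (x i) + b = u (x i))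
    (L : ℝ) (hL0 : 0 ≤ L)
    (hL : ∀ p ∈ T, ∀ q ∈ T, ‖(u p - B p) - (u q - B q)‖ ≤ L * ‖p - q‖) :
    ‖A - B‖ ≤ (2 * r₂ / r₁) * L :=
  stmt3_general n x T hT xbar r₁ r₂ hr₁ hball₁ hball₂ u A B b hinterp L hL0 hL
end

section
/- Let K ⊂ ℝⁿ be compact and f : K → ℝⁿ a 1-Lipschitz map. Define 𝒮 as the family of subsets H ⊂ K on which f restricts to an affine isometry (i.e., f(x) = Ax + b on H with A orthogonal), and C(f,K) := ⋃_{H ∈ 𝒮} conv(H). Then C(f,K) is a compact subset of ℝⁿ. -/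
open Metric Set

/-- Summing a function that vanishes off the range of an embedding. -/
lemma sum_eq_sum_of_emb {ι κ M : Type*} [Fintype ι] [Fintype κ] [AddCommMonoid M]
    (e : ι ↪ κ) (F : κ → M) (hF : ∀ i, (∀ j, e j ≠ i) → F i = 0) :
    ∑ i, F i = ∑ j, F (e j) := by
  rw [← Finset.sum_map Finset.univ e F]
  exact (Finset.sum_subset (Finset.subset_univ _) fun i _ hi =>
    hF i fun j hj => hi (Finset.mem_map.2 ⟨j, Finset.mem_univ j, hj⟩)).symm

/-- Abbreviation for the ambient Euclidean space. -/
abbrev Euc (n : ℕ) := EuclideanSpace ℝ (Fin (n+1))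

/-- The parameter space: (isometry candidate, translation, weights, points). -/
abbrev Pt (n m : ℕ) := (Euc n →L[ℝ] Euc n) × Euc n × (Fin m → ℝ) × (Fin m → Euc n)

/-- `C(f,K)`: the union of convex hulls of subsets `H ⊆ K` on which `f` is an
affine isometry (i.e. `f x = A x + b` on `H` with `A` a linear isometry). -/
def CfK (n : ℕ) (f : EuclideanSpace ℝ (Fin (n+1)) → EuclideanSpace ℝ (Fin (n+1)))
    (K : Set (EuclideanSpace ℝ (Fin (n+1)))) : Set (EuclideanSpace ℝ (Fin (n+1))) :=
  ⋃ H ∈ {H : Set (EuclideanSpace ℝ (Fin (n+1))) | H ⊆ K ∧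
      ∃ (A : EuclideanSpace ℝ (Fin (n+1)) →ₗᵢ[ℝ] EuclideanSpace ℝ (Fin (n+1)))
        (b : EuclideanSpace ℝ (Fin (n+1))), ∀ x ∈ H, f x = A x + b},
    convexHull ℝ H

theorem stmt4 (n : ℕ) (K : Set (EuclideanSpace ℝ (Fin (n+1)))) (hK : IsCompact K)
    (f : EuclideanSpace ℝ (Fin (n+1)) → EuclideanSpace ℝ (Fin (n+1)))
    (hf : LipschitzOnWith 1 f K) :
    IsCompact (CfK n f K) := by
  classical
  rcases K.eq_empty_or_nonempty with rfl | hKne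
  · have : CfK n f ∅ = ∅ := by
      apply Set.eq_empty_iff_forall_notMem.2
      intro x hx
      simp only [CfK, Set.mem_iUnion, Set.mem_setOf_eq] at hx
      obtain ⟨H, ⟨hHK, _⟩, hxH⟩ := hx
      rw [Set.subset_empty_iff.1 hHK] at hxH
      simp at hxH
    rw [this]; exact isCompact_empty
  -- bounds
  obtain ⟨M, hM⟩ : ∃ M, K ⊆ closedBall 0 M := hK.isBounded.subset_closedBall 0
  have hfK : IsCompact (f '' K) := hK.image_of_continuousOn hf.continuousOn
  obtain ⟨M', hM'⟩ : ∃ M', f '' K ⊆ closedBall 0 M' := hfK.isBounded.subset_closedBall 0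
  -- the parameter set
  set m := n + 2 with hm
  set P : Set (Pt n m) :=
    {p | (∀ x, ‖p.1 x‖ = ‖x‖) ∧ (∀ i, 0 ≤ p.2.2.1 i) ∧ (∑ i, p.2.2.1 i = 1) ∧
      (∀ i, p.2.2.2 i ∈ K) ∧ (∀ i, f (p.2.2.2 i) = p.1 (p.2.2.2 i) + p.2.1)} with hP
  -- continuity of basic coordinate maps
  have hcA : Continuous fun p : Pt n m => p.1 :=
    continuous_fst
  have hcb : Continuous fun p : Pt n m => p.2.1 :=
    continuous_fst.comp continuous_snd
  have hcw : ∀ i, Continuous fun p : Pt n m =>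
      p.2.2.1 i := fun i =>
    (continuous_apply i).comp (continuous_fst.comp (continuous_snd.comp continuous_snd))
  have hch : ∀ i, Continuous fun p : Pt n m =>
      p.2.2.2 i := fun i =>
    (continuous_apply i).comp (continuous_snd.comp (continuous_snd.comp continuous_snd))
  have hcAh : ∀ i, Continuous fun p : Pt n m =>
      p.1 (p.2.2.2 i) := fun i =>
    isBoundedBilinearMap_apply.continuous.comp (hcA.prodMk (hch i))
  -- P is closed
  have hPclosed : IsClosed P := by
    have h1 : IsClosed {p : Pt n m |
        ∀ x, ‖p.1 x‖ = ‖x‖} := by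
      rw [show {p : Pt n m | ∀ x, ‖p.1 x‖ = ‖x‖}
        = ⋂ x, {p | ‖p.1 x‖ = ‖x‖} by ext p; simp]
      refine isClosed_iInter fun x => isClosed_eq ?_ continuous_const
      exact (isBoundedBilinearMap_apply.continuous.comp
        (hcA.prodMk continuous_const)).norm
    have h2 : IsClosed {p : Pt n m |
        ∀ i, 0 ≤ p.2.2.1 i} := by
      rw [show {p : Pt n m | ∀ i, 0 ≤ p.2.2.1 i}
        = ⋂ i, {p | 0 ≤ p.2.2.1 i} by ext p; simp]
      exact isClosed_iInter fun i => isClosed_le continuous_const (hcw i)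
    have h3 : IsClosed {p : Pt n m |
        ∑ i, p.2.2.1 i = 1} :=
      isClosed_eq (continuous_finset_sum _ fun i _ => hcw i) continuous_const
    have h4 : ∀ i : Fin m, IsClosed {p : Pt n m |
        p.2.2.2 i ∈ K ∧ f (p.2.2.2 i) = p.1 (p.2.2.2 i) + p.2.1} := by
      intro i
      have hKi : IsClosed {p : Pt n m |
          p.2.2.2 i ∈ K} := hK.isClosed.preimage (hch i)
      have hg : ContinuousOn
          (fun p : Pt n m =>
            f (p.2.2.2 i) - (p.1 (p.2.2.2 i) + p.2.1))
          {p | p.2.2.2 i ∈ K} := by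
        refine ContinuousOn.sub ?_ ((hcAh i).continuousOn.add hcb.continuousOn)
        exact hf.continuousOn.comp (hch i).continuousOn fun p hp => hp
      have hcl : IsClosed ({p : Pt n m | p.2.2.2 i ∈ K} ∩
          (fun p : Pt n m => f (p.2.2.2 i) - (p.1 (p.2.2.2 i) + p.2.1)) ⁻¹' {0}) :=
        hg.preimage_isClosed_of_isClosed hKi isClosed_singleton
      convert hcl using 1
      ext p
      simp only [Set.mem_setOf_eq, Set.mem_inter_iff, Set.mem_preimage,
        Set.mem_singleton_iff, sub_eq_zero]
      try tauto
    have : P = {p : Pt n m | ∀ x, ‖p.1 x‖ = ‖x‖}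
        ∩ ({p | ∀ i, 0 ≤ p.2.2.1 i} ∩ ({p | ∑ i, p.2.2.1 i = 1}
        ∩ ⋂ i, {p | p.2.2.2 i ∈ K ∧ f (p.2.2.2 i) = p.1 (p.2.2.2 i) + p.2.1})) := by
      ext p
      simp only [hP, Set.mem_setOf_eq, Set.mem_inter_iff, Set.mem_iInter, forall_and]
      try tauto
    rw [this]
    exact h1.inter (h2.inter (h3.inter (isClosed_iInter h4)))
  -- P is contained in a compact set
  have hScompact : IsCompact {A : Euc n →L[ℝ] Euc n | ∀ x, ‖A x‖ = ‖x‖} := by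
    refine IsCompact.of_isClosed_subset (isCompact_closedBall (0 : Euc n →L[ℝ] Euc n) 1) ?_ ?_
    · rw [show {A : Euc n →L[ℝ] Euc n | ∀ x, ‖A x‖ = ‖x‖} = ⋂ x, {A | ‖A x‖ = ‖x‖} by ext A; simp]
      refine isClosed_iInter fun x => isClosed_eq ?_ continuous_const
      exact (isBoundedBilinearMap_apply.continuous.comp
        (continuous_id.prodMk continuous_const)).norm
    · intro A hA
      rw [mem_closedBall_zero_iff]
      exact ContinuousLinearMap.opNorm_le_bound A zero_le_one fun x => by
        rw [hA x, one_mul]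
  have hPcompact : IsCompact P := by
    refine IsCompact.of_isClosed_subset
      (hScompact.prod ((isCompact_closedBall (0 : Euc n) (M' + M)).prod
        ((isCompact_univ_pi fun _ : Fin m => isCompact_Icc (a := (0:ℝ)) (b := 1)).prod
          (isCompact_univ_pi fun _ : Fin m => hK)))) hPclosed ?_
    rintro ⟨A, b, w, h⟩ ⟨h1, h2, h3, h4, h5⟩
    refine ⟨h1, ?_, ?_, ?_⟩
    · rw [mem_closedBall_zero_iff]
      have hb : b = f (h 0) - A (h 0) := by rw [h5 0]; abel
      rw [hb]
      calc ‖f (h 0) - A (h 0)‖ ≤ ‖f (h 0)‖ + ‖A (h 0)‖ := norm_sub_le _ _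
        _ ≤ M' + M := by
            have hfh : ‖f (h 0)‖ ≤ M' := by
              have := hM' ⟨h 0, h4 0, rfl⟩
              rwa [mem_closedBall_zero_iff] at this
            have hAh : ‖A (h 0)‖ ≤ M := by
              rw [h1 (h 0)]
              have := hM (h4 0)
              rwa [mem_closedBall_zero_iff] at this
            exact add_le_add hfh hAh
    · intro i _
      refine ⟨h2 i, ?_⟩
      calc w i = ∑ j ∈ {i}, w j := by simp
        _ ≤ ∑ j, w j := Finset.sum_le_sum_of_subset_of_nonneg (Finset.subset_univ _)
            fun j _ _ => h2 j
        _ = 1 := h3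
    · intro i _
      exact h4 i
  -- the continuous map
  have hΦ : Continuous fun p : Pt n m =>
      ∑ i, p.2.2.1 i • p.2.2.2 i :=
    continuous_finset_sum _ fun i _ => (hcw i).smul (hch i)
  -- CfK equals the image of P
  have hEq : CfK n f K = (fun p : Pt n m =>
      ∑ i, p.2.2.1 i • p.2.2.2 i) '' P := by
    apply Set.Subset.antisymm
    · -- CfK ⊆ image
      intro x hx
      simp only [CfK, Set.mem_iUnion, Set.mem_setOf_eq] at hx
      obtain ⟨H, ⟨hHK, A, b, hab⟩, hxH⟩ := hx
      obtain ⟨ι, hι, z, w, hzH, hai, hwpos, hwsum, hwz⟩ :=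
        eq_pos_convex_span_of_mem_convexHull hxH
      have hne : Nonempty ι := by
        rcases isEmpty_or_nonempty ι with hemp | hne
        · rw [Finset.univ_eq_empty, Finset.sum_empty] at hwsum
          exact absurd hwsum zero_ne_one
        · exact hne
      have hcard : Fintype.card ι ≤ m := by
        have h1 := hai.card_le_finrank_succ
        have h2 : Module.finrank ℝ (vectorSpan ℝ (Set.range z)) ≤ n + 1 := by
          have := Submodule.finrank_le (vectorSpan ℝ (Set.range z))
          rwa [show Module.finrank ℝ (Euc n) = n + 1 from finrank_euclideanSpace_fin] at this
        omega
      obtain ⟨e⟩ : Nonempty (ι ↪ Fin m) :=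
        Function.Embedding.nonempty_of_card_le (by simpa using hcard)
      set j₀ : ι := Classical.arbitrary ι
      set wv : Fin m → ℝ := Function.extend e w fun _ => 0 with hwv
      set hv : Fin m → Euc n := Function.extend e z fun _ => z j₀ with hhv
      have hwv_apply : ∀ j, wv (e j) = w j := fun j => e.injective.extend_apply _ _ _
      have hhv_apply : ∀ j, hv (e j) = z j := fun j => e.injective.extend_apply _ _ _
      have hwv_zero : ∀ i, (∀ j, e j ≠ i) → wv i = 0 := fun i hi =>
        Function.extend_apply' _ _ _ (fun ⟨j, hj⟩ => hi j hj)
      have hhv_mem : ∀ i, hv i ∈ H := by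
        intro i
        by_cases hi : ∃ j, e j = i
        · obtain ⟨j, rfl⟩ := hi
          rw [hhv_apply]
          exact hzH ⟨j, rfl⟩
        · rw [hhv, Function.extend_apply' _ _ _ hi]
          exact hzH ⟨j₀, rfl⟩
      refine ⟨(A.toContinuousLinearMap, b, wv, hv), ⟨?_, ?_, ?_, ?_, ?_⟩, ?_⟩
      · intro y
        simp [A.norm_map]
      · intro i
        show 0 ≤ wv i
        by_cases hi : ∃ j, e j = i
        · obtain ⟨j, rfl⟩ := hi
          rw [hwv_apply]
          exact (hwpos j).le
        · rw [hwv_zero i fun j hj => hi ⟨j, hj⟩]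
      · show ∑ i, wv i = 1
        rw [sum_eq_sum_of_emb e wv hwv_zero]
        simp only [hwv_apply]
        exact hwsum
      · intro i
        exact hHK (hhv_mem i)
      · intro i
        show f (hv i) = A.toContinuousLinearMap (hv i) + b
        simp only [LinearIsometry.coe_toContinuousLinearMap]
        exact hab _ (hhv_mem i)
      · show ∑ i, wv i • hv i = x
        rw [sum_eq_sum_of_emb e (fun i => wv i • hv i)
          (fun i hi => by show wv i • hv i = 0; rw [hwv_zero i hi, zero_smul])]
        simp only [hwv_apply, hhv_apply]
        exact hwz
    · -- image ⊆ CfK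
      rintro x ⟨⟨A, b, w, h⟩, ⟨h1, h2, h3, h4, h5⟩, rfl⟩
      simp only [CfK, Set.mem_iUnion, Set.mem_setOf_eq]
      refine ⟨Set.range h, ⟨?_, ⟨(A : Euc n →ₗ[ℝ] Euc n), h1⟩, b, ?_⟩, ?_⟩
      · rintro _ ⟨i, rfl⟩
        exact h4 i
      · rintro _ ⟨i, rfl⟩
        exact h5 i
      · exact (convex_convexHull ℝ _).sum_mem (fun i _ => h2 i) h3
          fun i _ => subset_convexHull ℝ _ ⟨i, rfl⟩
  rw [hEq]
  exact hPcompact.image hΦ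
end

section
/- Let K ⊂ ℝⁿ be compact and f : K → ℝⁿ a 1-Lipschitz map. Suppose x, y ∈ C(f,K) and the unique 1-Lipschitz extension f̄ of f to C(f,K) satisfies |f̄(x) - f̄(y)| = |x - y|. Then the segment [x,y] is contained in C(f,K). Consequently C(f̄, C(f,K)) = C(f,K). -/
open scoped RealInnerProductSpace

section Aux
variable {E : Type*} [NormedAddCommGroup E] [InnerProductSpace ℝ E]

lemma inner_sum_smul_sum_smul {ι κ : Type*} (s : Finset ι) (r : Finset κ)
    (c : ι → ℝ) (d : κ → ℝ) (u : ι → E) (v : κ → E) :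
    ⟪(∑ i ∈ s, c i • u i), (∑ j ∈ r, d j • v j)⟫
      = ∑ i ∈ s, ∑ j ∈ r, c i * d j * ⟪u i, v j⟫ := by
  rw [sum_inner]
  refine Finset.sum_congr rfl fun i _ => ?_
  rw [real_inner_smul_left, inner_sum, Finset.mul_sum]
  refine Finset.sum_congr rfl fun j _ => ?_
  rw [real_inner_smul_right]; ring

lemma eq_barycenter_of_dist_le {ι : Type*} (t : Finset ι) (w : ι → ℝ) (q : ι → E) (p qbar : E)
    (h0 : ∀ i ∈ t, 0 ≤ w i) (h1 : ∑ i ∈ t, w i = 1)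
    (hbar : ∑ i ∈ t, w i • q i = qbar)
    (hle : ∀ i ∈ t, ‖p - q i‖ ≤ ‖qbar - q i‖) : p = qbar := by
  have e2 : ∑ i ∈ t, w i * ⟪p - qbar, q i⟫ = ⟪p - qbar, qbar⟫ := by
    rw [← hbar, inner_sum]
    refine Finset.sum_congr rfl fun i _ => ?_
    rw [real_inner_smul_right]
  have hid : ∑ i ∈ t, w i * (‖p - q i‖ ^ 2 - ‖qbar - q i‖ ^ 2) = ‖p - qbar‖ ^ 2 := by
    have e1 : ∀ i ∈ t, w i * (‖p - q i‖ ^ 2 - ‖qbar - q i‖ ^ 2)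
        = w i * (‖p‖ ^ 2 - ‖qbar‖ ^ 2) - 2 * (w i * ⟪p - qbar, q i⟫) := by
      intro i _
      rw [norm_sub_sq_real, norm_sub_sq_real, inner_sub_left]; ring
    rw [Finset.sum_congr rfl e1, Finset.sum_sub_distrib, ← Finset.sum_mul, h1, ← Finset.mul_sum,
      e2, norm_sub_sq_real, inner_sub_left, real_inner_self_eq_norm_sq]
    ring
  have hle2 : ∑ i ∈ t, w i * (‖p - q i‖ ^ 2 - ‖qbar - q i‖ ^ 2) ≤ 0 := by
    refine Finset.sum_nonpos fun i hi => ?_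
    have h2 : ‖p - q i‖ ^ 2 ≤ ‖qbar - q i‖ ^ 2 :=
      pow_le_pow_left₀ (norm_nonneg _) (hle i hi) 2
    have h3 := h0 i hi
    nlinarith
  have h4 : ‖p - qbar‖ ^ 2 ≤ 0 := hid ▸ hle2
  have h5 : ‖p - qbar‖ = 0 := by nlinarith [norm_nonneg (p - qbar)]
  rwa [norm_eq_zero, sub_eq_zero] at h5

lemma lipschitz_eq_affine_on_convexHull {C H : Set E} {g : E → E}
    (hd : ∀ a ∈ C, ∀ b ∈ C, dist (g a) (g b) ≤ dist a b)
    (hHC : H ⊆ C) (A : E →ₗᵢ[ℝ] E) (b : E) (hgH : ∀ h ∈ H, g h = A h + b)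
    {z : E} (hz : z ∈ convexHull ℝ H) (hzC : z ∈ C) : g z = A z + b := by
  rw [convexHull_eq] at hz
  obtain ⟨ι, t, w, zf, h0, h1, hmem, hc⟩ := hz
  have hz' : ∑ i ∈ t, w i • zf i = z := by
    rw [← hc, Finset.centerMass_eq_of_sum_1 _ _ h1]
  refine eq_barycenter_of_dist_le t w (fun i => A (zf i) + b) _ _ h0 h1 ?_ ?_
  · have e1 : ∀ i ∈ t, w i • (A (zf i) + b) = A (w i • zf i) + w i • b := by
      intro i _; rw [smul_add, map_smul]
    rw [Finset.sum_congr rfl e1, Finset.sum_add_distrib, ← map_sum, hz', ← Finset.sum_smul, h1,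
      one_smul]
  · intro i hi
    have h2 := hd z hzC (zf i) (hHC (hmem i hi))
    rw [dist_eq_norm, dist_eq_norm, hgH _ (hmem i hi)] at h2
    refine h2.trans_eq ?_
    rw [add_sub_add_right_eq_sub, ← map_sub, A.norm_map]
end Aux

lemma exists_affine_isometry_extension {V : Type*} [NormedAddCommGroup V]
    [InnerProductSpace ℝ V] [FiniteDimensional ℝ V]
    {ι : Type*} [Fintype ι] [Nonempty ι] (p q : ι → V)
    (h : ∀ i j, ‖q i - q j‖ = ‖p i - p j‖) :
    ∃ (A : V →ₗᵢ[ℝ] V) (b : V), ∀ i, q i = A (p i) + b := by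
  classical
  obtain ⟨i₀⟩ := ‹Nonempty ι›
  set u : ι → V := fun i => p i - p i₀ with hu
  set u' : ι → V := fun i => q i - q i₀ with hu'
  have hnorm : ∀ i, ‖u' i‖ = ‖u i‖ := fun i => h i i₀
  have hsub : ∀ i j, ‖u' i - u' j‖ = ‖u i - u j‖ := by
    intro i j
    simp only [hu, hu', sub_sub_sub_cancel_right]
    exact h i j
  have hinner : ∀ i j, ⟪u' i, u' j⟫ = ⟪u i, u j⟫ := by
    intro i j
    have e1 := norm_sub_sq_real (u' i) (u' j)
    have e2 := norm_sub_sq_real (u i) (u j)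
    rw [hsub i j, hnorm i, hnorm j] at e1
    linarith
  let L : (ι → ℝ) →ₗ[ℝ] V :=
    { toFun := fun c => ∑ i, c i • u i
      map_add' := by intro c d; simp [add_smul, Finset.sum_add_distrib]
      map_smul' := by intro m c; simp [smul_smul, Finset.smul_sum] }
  let L' : (ι → ℝ) →ₗ[ℝ] V :=
    { toFun := fun c => ∑ i, c i • u' i
      map_add' := by intro c d; simp [add_smul, Finset.sum_add_distrib]
      map_smul' := by intro m c; simp [smul_smul, Finset.smul_sum] }
  have hgram : ∀ {κ : Type} (v v' : ι → V), (∀ i j, ⟪v' i, v' j⟫ = ⟪v i, v j⟫) → ∀ c d : ι → ℝ,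
      ⟪(∑ i, c i • v' i), (∑ j, d j • v' j)⟫ = ⟪(∑ i, c i • v i), (∑ j, d j • v j)⟫ := by
    intro κ v v' hvv c d
    rw [inner_sum_smul_sum_smul, inner_sum_smul_sum_smul]
    exact Finset.sum_congr rfl fun i _ => Finset.sum_congr rfl fun j _ => by rw [hvv]
  have hLinner : ∀ c d, ⟪L' c, L' d⟫ = ⟪L c, L d⟫ := fun c d =>
    hgram (κ := ℕ) u u' hinner c d
  have hker : LinearMap.ker L ≤ LinearMap.ker L' := by
    intro c hc
    rw [LinearMap.mem_ker] at hc ⊢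
    have h0 : ⟪L' c, L' c⟫ = (0 : ℝ) := by rw [hLinner, hc, inner_zero_right]
    exact inner_self_eq_zero.mp h0
  let M : ↥(LinearMap.range L) →ₗ[ℝ] V :=
    (Submodule.liftQ (LinearMap.ker L) L' hker).comp
      (L.quotKerEquivRange.symm.toLinearMap)
  have hM : ∀ c : ι → ℝ, M ⟨L c, LinearMap.mem_range_self L c⟩ = L' c := by
    intro c
    have h1 := L.quotKerEquivRange_symm_apply_image c (LinearMap.mem_range_self L c)
    simp only [M, LinearMap.coe_comp, LinearEquiv.coe_coe, Function.comp_apply, h1,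
      Submodule.liftQ_apply, Submodule.mkQ_apply]
  have hMinner : ∀ x y : ↥(LinearMap.range L), ⟪M x, M y⟫ = ⟪x, y⟫ := by
    rintro ⟨x, c, rfl⟩ ⟨y, d, rfl⟩
    have hx : (⟨L c, ⟨c, rfl⟩⟩ : ↥(LinearMap.range L)) = ⟨L c, LinearMap.mem_range_self L c⟩ := rfl
    have hy : (⟨L d, ⟨d, rfl⟩⟩ : ↥(LinearMap.range L)) = ⟨L d, LinearMap.mem_range_self L d⟩ := rfl
    rw [hx, hy, hM c, hM d, hLinner]
    rfl
  let Miso : ↥(LinearMap.range L) →ₗᵢ[ℝ] V := M.isometryOfInner hMinner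
  let A := Miso.extend
  have hA : ∀ c, A (L c) = L' c := by
    intro c
    have h1 := Miso.extend_apply (⟨L c, LinearMap.mem_range_self L c⟩ : ↥(LinearMap.range L))
    have h2 : Miso ⟨L c, LinearMap.mem_range_self L c⟩ = M ⟨L c, LinearMap.mem_range_self L c⟩ :=
      rfl
    rw [h2, hM c] at h1
    exact h1
  have hAu : ∀ i, A (u i) = u' i := by
    intro i
    have e1 : u i = L (fun j => if j = i then 1 else 0) := by
      simp [L, ite_smul, Finset.sum_ite_eq']
    have e2 : u' i = L' (fun j => if j = i then 1 else 0) := by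
      simp [L', ite_smul, Finset.sum_ite_eq']
    rw [e1, e2, hA]
  refine ⟨A, q i₀ - A (p i₀), fun i => ?_⟩
  have e3 : A (p i) = A (u i) + A (p i₀) := by
    rw [← map_add]
    congr 1
    simp [hu]
  rw [e3, hAu i]
  simp only [hu']
  abel

section Helpers
variable {E : Type*} [NormedAddCommGroup E] [InnerProductSpace ℝ E]

lemma inner_le_of_norm_sub_le (X Y X' Y' : E) (h : ‖X' - Y'‖ ≤ ‖X - Y‖)
    (hXX : ⟪X', X'⟫ = ⟪X, X⟫) (hYY : ⟪Y', Y'⟫ = ⟪Y, Y⟫) : ⟪X, Y⟫ ≤ ⟪X', Y'⟫ := by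
  have h2 : ‖X' - Y'‖ ^ 2 ≤ ‖X - Y‖ ^ 2 := pow_le_pow_left₀ (norm_nonneg _) h 2
  rw [← real_inner_self_eq_norm_sq, ← real_inner_self_eq_norm_sq] at h2
  simp only [inner_sub_left, inner_sub_right] at h2
  linarith [real_inner_comm X Y, real_inner_comm X' Y']

lemma inner_le_of_norm_sub_sub_le (X Y Z X' Y' Z' : E) (h : ‖X' - Y' - Z'‖ ≤ ‖X - Y - Z‖)
    (hXX : ⟪X', X'⟫ = ⟪X, X⟫) (hYY : ⟪Y', Y'⟫ = ⟪Y, Y⟫) (hZZ : ⟪Z', Z'⟫ = ⟪Z, Z⟫)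
    (hXZ : ⟪X', Z'⟫ = ⟪X, Z⟫) (hYZ : ⟪Y', Z'⟫ = ⟪Y, Z⟫) : ⟪X, Y⟫ ≤ ⟪X', Y'⟫ := by
  have h2 : ‖X' - Y' - Z'‖ ^ 2 ≤ ‖X - Y - Z‖ ^ 2 := pow_le_pow_left₀ (norm_nonneg _) h 2
  rw [← real_inner_self_eq_norm_sq, ← real_inner_self_eq_norm_sq] at h2
  simp only [inner_sub_left, inner_sub_right] at h2
  linarith [real_inner_comm X Y, real_inner_comm X' Y', real_inner_comm X Z,
    real_inner_comm X' Z', real_inner_comm Y Z, real_inner_comm Y' Z']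

lemma norm_sub_sub_eq_of_inner (X Y Z X' Y' Z' : E)
    (hXX : ⟪X', X'⟫ = ⟪X, X⟫) (hYY : ⟪Y', Y'⟫ = ⟪Y, Y⟫) (hZZ : ⟪Z', Z'⟫ = ⟪Z, Z⟫)
    (hXZ : ⟪X', Z'⟫ = ⟪X, Z⟫) (hYZ : ⟪Y', Z'⟫ = ⟪Y, Z⟫) (hXY : ⟪X', Y'⟫ = ⟪X, Y⟫) :
    ‖X' - Y' - Z'‖ = ‖X - Y - Z‖ := by
  have h0 : ⟪X' - Y' - Z', X' - Y' - Z'⟫ = ⟪X - Y - Z, X - Y - Z⟫ := by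
    simp only [inner_sub_left, inner_sub_right]
    linarith [real_inner_comm X Y, real_inner_comm X' Y', real_inner_comm X Z,
      real_inner_comm X' Z', real_inner_comm Y Z, real_inner_comm Y' Z']
  rw [real_inner_self_eq_norm_sq, real_inner_self_eq_norm_sq] at h0
  have := congrArg Real.sqrt h0
  rwa [Real.sqrt_sq (norm_nonneg _), Real.sqrt_sq (norm_nonneg _)] at this
end Helpers

lemma convexHull_subset_CfK {n : ℕ} {f : EuclideanSpace ℝ (Fin (n+1)) → EuclideanSpace ℝ (Fin (n+1))}
    {K H : Set (EuclideanSpace ℝ (Fin (n+1)))} (hHK : H ⊆ K)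
    (A : EuclideanSpace ℝ (Fin (n+1)) →ₗᵢ[ℝ] EuclideanSpace ℝ (Fin (n+1)))
    (b : EuclideanSpace ℝ (Fin (n+1))) (hw : ∀ x ∈ H, f x = A x + b) :
    convexHull ℝ H ⊆ CfK n f K :=
  Set.subset_biUnion_of_mem (show H ∈ _ from ⟨hHK, A, b, hw⟩)

lemma mem_CfK_iff {n : ℕ} {f : EuclideanSpace ℝ (Fin (n+1)) → EuclideanSpace ℝ (Fin (n+1))}
    {K : Set (EuclideanSpace ℝ (Fin (n+1)))} {z : EuclideanSpace ℝ (Fin (n+1))} :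
    z ∈ CfK n f K ↔ ∃ H, (H ⊆ K ∧
      ∃ (A : EuclideanSpace ℝ (Fin (n+1)) →ₗᵢ[ℝ] EuclideanSpace ℝ (Fin (n+1)))
        (b : EuclideanSpace ℝ (Fin (n+1))), ∀ x ∈ H, f x = A x + b) ∧ z ∈ convexHull ℝ H := by
  simp only [CfK, Set.mem_iUnion, Set.mem_setOf_eq, exists_prop]

lemma segment_subset_CfK (n : ℕ) (K : Set (EuclideanSpace ℝ (Fin (n+1))))
    (f fbar : EuclideanSpace ℝ (Fin (n+1)) → EuclideanSpace ℝ (Fin (n+1)))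
    (hfbarLip : LipschitzOnWith 1 fbar (CfK n f K))
    (hfbarExt : Set.EqOn fbar f K) :
    ∀ x ∈ CfK n f K, ∀ y ∈ CfK n f K,
      ‖fbar x - fbar y‖ = ‖x - y‖ → segment ℝ x y ⊆ CfK n f K := by
  classical
  intro x hx y hy hnorm
  have hd : ∀ a ∈ CfK n f K, ∀ b ∈ CfK n f K, dist (fbar a) (fbar b) ≤ dist a b := by
    intro a ha b hb
    have := lipschitzOnWith_iff_dist_le_mul.mp hfbarLip a ha b hb
    simpa using this
  obtain ⟨H₁, ⟨hH₁K, A₁, b₁, hw₁⟩, hx₁⟩ := mem_CfK_iff.mp hx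
  obtain ⟨H₂, ⟨hH₂K, A₂, b₂, hw₂⟩, hy₂⟩ := mem_CfK_iff.mp hy
  have hH₁C : convexHull ℝ H₁ ⊆ CfK n f K := convexHull_subset_CfK hH₁K A₁ b₁ hw₁
  have hH₂C : convexHull ℝ H₂ ⊆ CfK n f K := convexHull_subset_CfK hH₂K A₂ b₂ hw₂
  have hH₁C' : H₁ ⊆ CfK n f K := (subset_convexHull ℝ H₁).trans hH₁C
  have hH₂C' : H₂ ⊆ CfK n f K := (subset_convexHull ℝ H₂).trans hH₂C
  have hgH₁ : ∀ h ∈ H₁, fbar h = A₁ h + b₁ := fun h hh => (hfbarExt (hH₁K hh)).trans (hw₁ h hh)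
  have hgH₂ : ∀ h ∈ H₂, fbar h = A₂ h + b₂ := fun h hh => (hfbarExt (hH₂K hh)).trans (hw₂ h hh)
  have hfx : fbar x = A₁ x + b₁ :=
    lipschitz_eq_affine_on_convexHull hd hH₁C' A₁ b₁ hgH₁ hx₁ hx
  have hfy : fbar y = A₂ y + b₂ :=
    lipschitz_eq_affine_on_convexHull hd hH₂C' A₂ b₂ hgH₂ hy₂ hy
  -- finite representations with positive weights
  rw [convexHull_eq] at hx₁ hy₂
  obtain ⟨ι₁, s₁, w₁, a, hw₁0, hw₁1, haH, hac⟩ := hx₁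
  obtain ⟨ι₂, s₂, w₂, bb, hw₂0, hw₂1, hbH, hbc⟩ := hy₂
  have hxa : ∑ i ∈ s₁, w₁ i • a i = x := by
    rw [← hac, Finset.centerMass_eq_of_sum_1 _ _ hw₁1]
  have hyb : ∑ j ∈ s₂, w₂ j • bb j = y := by
    rw [← hbc, Finset.centerMass_eq_of_sum_1 _ _ hw₂1]
  set t₁ := s₁.filter (fun i => w₁ i ≠ 0) with ht₁def
  set t₂ := s₂.filter (fun j => w₂ j ≠ 0) with ht₂def
  have hw₁pos : ∀ i ∈ t₁, 0 < w₁ i := fun i hi =>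
    (hw₁0 i (Finset.mem_of_mem_filter i hi)).lt_of_ne (Ne.symm (Finset.mem_filter.mp hi).2)
  have hw₂pos : ∀ j ∈ t₂, 0 < w₂ j := fun j hj =>
    (hw₂0 j (Finset.mem_of_mem_filter j hj)).lt_of_ne (Ne.symm (Finset.mem_filter.mp hj).2)
  have hw₁1' : ∑ i ∈ t₁, w₁ i = 1 := by
    rw [ht₁def, Finset.sum_filter_ne_zero]; exact hw₁1
  have hw₂1' : ∑ j ∈ t₂, w₂ j = 1 := by
    rw [ht₂def, Finset.sum_filter_ne_zero]; exact hw₂1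
  have hxa' : ∑ i ∈ t₁, w₁ i • a i = x := by
    rw [← hxa, ht₁def]
    exact Finset.sum_filter_of_ne (fun i _ hne h0 => hne (by rw [h0, zero_smul]))
  have hyb' : ∑ j ∈ t₂, w₂ j • bb j = y := by
    rw [← hyb, ht₂def]
    exact Finset.sum_filter_of_ne (fun j _ hne h0 => hne (by rw [h0, zero_smul]))
  have haH' : ∀ i ∈ t₁, a i ∈ H₁ := fun i hi => haH i (Finset.mem_of_mem_filter i hi)
  have hbH' : ∀ j ∈ t₂, bb j ∈ H₂ := fun j hj => hbH j (Finset.mem_of_mem_filter j hj)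
  -- basic inner product equalities
  have hww : ⟪fbar y - fbar x, fbar y - fbar x⟫ = ⟪y - x, y - x⟫ := by
    rw [real_inner_self_eq_norm_sq, real_inner_self_eq_norm_sq,
      norm_sub_rev (fbar y), norm_sub_rev y, hnorm]
  have hαα : ∀ i, ⟪A₁ (a i) - A₁ x, A₁ (a i) - A₁ x⟫ = ⟪a i - x, a i - x⟫ := by
    intro i
    rw [real_inner_self_eq_norm_sq, real_inner_self_eq_norm_sq, ← map_sub, A₁.norm_map]
  have hββ : ∀ j, ⟪A₂ (bb j) - A₂ y, A₂ (bb j) - A₂ y⟫ = ⟪bb j - y, bb j - y⟫ := by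
    intro j
    rw [real_inner_self_eq_norm_sq, real_inner_self_eq_norm_sq, ← map_sub, A₂.norm_map]
  -- sums of difference vectors vanish
  have hsumα : ∑ i ∈ t₁, w₁ i • (a i - x) = 0 := by
    simp only [smul_sub, Finset.sum_sub_distrib, hxa', ← Finset.sum_smul, hw₁1', one_smul,
      sub_self]
  have hsumβ : ∑ j ∈ t₂, w₂ j • (bb j - y) = 0 := by
    simp only [smul_sub, Finset.sum_sub_distrib, hyb', ← Finset.sum_smul, hw₂1', one_smul,
      sub_self]
  have hsumα' : ∑ i ∈ t₁, w₁ i • (A₁ (a i) - A₁ x) = 0 := by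
    have e : ∀ i ∈ t₁, w₁ i • (A₁ (a i) - A₁ x) = A₁ (w₁ i • (a i - x)) := by
      intro i _; rw [map_smul, map_sub]
    rw [Finset.sum_congr rfl e, ← map_sum, hsumα, map_zero]
  have hsumβ' : ∑ j ∈ t₂, w₂ j • (A₂ (bb j) - A₂ y) = 0 := by
    have e : ∀ j ∈ t₂, w₂ j • (A₂ (bb j) - A₂ y) = A₂ (w₂ j • (bb j - y)) := by
      intro j _; rw [map_smul, map_sub]
    rw [Finset.sum_congr rfl e, ← map_sum, hsumβ, map_zero]
  -- first order inequalities and equalities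
  have P1 : ∀ i ∈ t₁, ⟪a i - x, y - x⟫ ≤ ⟪A₁ (a i) - A₁ x, fbar y - fbar x⟫ := by
    intro i hi
    have hlip := hd (a i) (hH₁C' (haH' i hi)) y hy
    rw [dist_eq_norm, dist_eq_norm, hgH₁ _ (haH' i hi)] at hlip
    have e1 : A₁ (a i) + b₁ - fbar y = (A₁ (a i) - A₁ x) - (fbar y - fbar x) := by
      rw [hfx]; abel
    have e2 : a i - y = (a i - x) - (y - x) := by abel
    rw [e1, e2] at hlip
    exact inner_le_of_norm_sub_le _ _ _ _ hlip (hαα i) hww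
  have E1 : ∀ i ∈ t₁, ⟪A₁ (a i) - A₁ x, fbar y - fbar x⟫ = ⟪a i - x, y - x⟫ := by
    have hz : ∑ i ∈ t₁, w₁ i * (⟪A₁ (a i) - A₁ x, fbar y - fbar x⟫ - ⟪a i - x, y - x⟫) = 0 := by
      have e : ∀ i ∈ t₁, w₁ i * (⟪A₁ (a i) - A₁ x, fbar y - fbar x⟫ - ⟪a i - x, y - x⟫)
          = ⟪w₁ i • (A₁ (a i) - A₁ x), fbar y - fbar x⟫ - ⟪w₁ i • (a i - x), y - x⟫ := by
        intro i _
        rw [real_inner_smul_left, real_inner_smul_left]; ring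
      rw [Finset.sum_congr rfl e, Finset.sum_sub_distrib, ← sum_inner, ← sum_inner, hsumα,
        hsumα']
      simp
    have hnn : ∀ i ∈ t₁,
        0 ≤ w₁ i * (⟪A₁ (a i) - A₁ x, fbar y - fbar x⟫ - ⟪a i - x, y - x⟫) := fun i hi =>
      mul_nonneg (hw₁pos i hi).le (sub_nonneg.2 (P1 i hi))
    intro i hi
    have h0 := (Finset.sum_eq_zero_iff_of_nonneg hnn).mp hz i hi
    rcases mul_eq_zero.mp h0 with h | h
    · exact absurd h (hw₁pos i hi).ne'
    · linarith [sub_eq_zero.mp h]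
  have P2 : ∀ j ∈ t₂, ⟪A₂ (bb j) - A₂ y, fbar y - fbar x⟫ ≤ ⟪bb j - y, y - x⟫ := by
    intro j hj
    have hlip := hd (bb j) (hH₂C' (hbH' j hj)) x hx
    rw [dist_eq_norm, dist_eq_norm, hgH₂ _ (hbH' j hj)] at hlip
    have e1 : A₂ (bb j) + b₂ - fbar x = (A₂ (bb j) - A₂ y) - -(fbar y - fbar x) := by
      rw [hfy]; abel
    have e2 : bb j - x = (bb j - y) - -(y - x) := by abel
    rw [e1, e2] at hlip
    have h3 := inner_le_of_norm_sub_le _ _ _ _ hlip (hββ j)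
      (by rw [inner_neg_neg, inner_neg_neg]; exact hww)
    rw [inner_neg_right, inner_neg_right] at h3
    linarith
  have E2 : ∀ j ∈ t₂, ⟪A₂ (bb j) - A₂ y, fbar y - fbar x⟫ = ⟪bb j - y, y - x⟫ := by
    have hz : ∑ j ∈ t₂, w₂ j * (⟪bb j - y, y - x⟫ - ⟪A₂ (bb j) - A₂ y, fbar y - fbar x⟫) = 0 := by
      have e : ∀ j ∈ t₂, w₂ j * (⟪bb j - y, y - x⟫ - ⟪A₂ (bb j) - A₂ y, fbar y - fbar x⟫)
          = ⟪w₂ j • (bb j - y), y - x⟫ - ⟪w₂ j • (A₂ (bb j) - A₂ y), fbar y - fbar x⟫ := by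
        intro j _
        rw [real_inner_smul_left, real_inner_smul_left]; ring
      rw [Finset.sum_congr rfl e, Finset.sum_sub_distrib, ← sum_inner, ← sum_inner, hsumβ,
        hsumβ']
      simp
    have hnn : ∀ j ∈ t₂,
        0 ≤ w₂ j * (⟪bb j - y, y - x⟫ - ⟪A₂ (bb j) - A₂ y, fbar y - fbar x⟫) := fun j hj =>
      mul_nonneg (hw₂pos j hj).le (sub_nonneg.2 (P2 j hj))
    intro j hj
    have h0 := (Finset.sum_eq_zero_iff_of_nonneg hnn).mp hz j hj
    rcases mul_eq_zero.mp h0 with h | h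
    · exact absurd h (hw₂pos j hj).ne'
    · linarith [sub_eq_zero.mp h]
  -- second order inequality and equality
  have P3 : ∀ i ∈ t₁, ∀ j ∈ t₂,
      ⟪a i - x, bb j - y⟫ ≤ ⟪A₁ (a i) - A₁ x, A₂ (bb j) - A₂ y⟫ := by
    intro i hi j hj
    have hlip := hd (a i) (hH₁C' (haH' i hi)) (bb j) (hH₂C' (hbH' j hj))
    rw [dist_eq_norm, dist_eq_norm, hgH₁ _ (haH' i hi), hgH₂ _ (hbH' j hj)] at hlip
    have e1 : A₁ (a i) + b₁ - (A₂ (bb j) + b₂)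
        = (A₁ (a i) - A₁ x) - (A₂ (bb j) - A₂ y) - (fbar y - fbar x) := by
      rw [hfx, hfy]; abel
    have e2 : a i - bb j = (a i - x) - (bb j - y) - (y - x) := by abel
    rw [e1, e2] at hlip
    exact inner_le_of_norm_sub_sub_le _ _ _ _ _ _ hlip (hαα i) (hββ j) hww
      (E1 i hi) (E2 j hj)
  have E3 : ∀ i ∈ t₁, ∀ j ∈ t₂,
      ⟪A₁ (a i) - A₁ x, A₂ (bb j) - A₂ y⟫ = ⟪a i - x, bb j - y⟫ := by
    have hz : ∑ p ∈ t₁ ×ˢ t₂, (w₁ p.1 * w₂ p.2) *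
        (⟪A₁ (a p.1) - A₁ x, A₂ (bb p.2) - A₂ y⟫ - ⟪a p.1 - x, bb p.2 - y⟫) = 0 := by
      rw [Finset.sum_product]
      have g1 := inner_sum_smul_sum_smul t₁ t₂ w₁ w₂
        (fun i => A₁ (a i) - A₁ x) (fun j => A₂ (bb j) - A₂ y)
      have g2 := inner_sum_smul_sum_smul t₁ t₂ w₁ w₂
        (fun i => a i - x) (fun j => bb j - y)
      rw [hsumα', hsumβ', inner_zero_left] at g1
      rw [hsumα, hsumβ, inner_zero_left] at g2
      have e : ∀ i ∈ t₁, ∀ j ∈ t₂, (w₁ i * w₂ j) *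
          (⟪A₁ (a i) - A₁ x, A₂ (bb j) - A₂ y⟫ - ⟪a i - x, bb j - y⟫)
          = w₁ i * w₂ j * ⟪A₁ (a i) - A₁ x, A₂ (bb j) - A₂ y⟫
            - w₁ i * w₂ j * ⟪a i - x, bb j - y⟫ := by
        intro i _ j _; ring
      calc ∑ i ∈ t₁, ∑ j ∈ t₂, (w₁ i * w₂ j) *
            (⟪A₁ (a i) - A₁ x, A₂ (bb j) - A₂ y⟫ - ⟪a i - x, bb j - y⟫)
          = (∑ i ∈ t₁, ∑ j ∈ t₂, w₁ i * w₂ j * ⟪A₁ (a i) - A₁ x, A₂ (bb j) - A₂ y⟫)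
            - ∑ i ∈ t₁, ∑ j ∈ t₂, w₁ i * w₂ j * ⟪a i - x, bb j - y⟫ := by
            rw [← Finset.sum_sub_distrib]
            refine Finset.sum_congr rfl fun i hi => ?_
            rw [← Finset.sum_sub_distrib]
            exact Finset.sum_congr rfl fun j hj => e i hi j hj
        _ = 0 := by rw [← g1, ← g2]; simp
    have hnn : ∀ p ∈ t₁ ×ˢ t₂, 0 ≤ (w₁ p.1 * w₂ p.2) *
        (⟪A₁ (a p.1) - A₁ x, A₂ (bb p.2) - A₂ y⟫ - ⟪a p.1 - x, bb p.2 - y⟫) := by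
      rintro ⟨i, j⟩ hp
      rw [Finset.mem_product] at hp
      exact mul_nonneg (mul_nonneg (hw₁pos i hp.1).le (hw₂pos j hp.2).le)
        (sub_nonneg.2 (P3 i hp.1 j hp.2))
    intro i hi j hj
    have h0 := (Finset.sum_eq_zero_iff_of_nonneg hnn).mp hz (i, j)
      (Finset.mem_product.mpr ⟨hi, hj⟩)
    rcases mul_eq_zero.mp h0 with h | h
    · exact absurd h (mul_pos (hw₁pos i hi) (hw₂pos j hj)).ne'
    · linarith [sub_eq_zero.mp h]
  -- cross distances are preserved
  have hcross : ∀ i ∈ t₁, ∀ j ∈ t₂,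
      ‖(A₁ (a i) + b₁) - (A₂ (bb j) + b₂)‖ = ‖a i - bb j‖ := by
    intro i hi j hj
    have e1 : A₁ (a i) + b₁ - (A₂ (bb j) + b₂)
        = (A₁ (a i) - A₁ x) - (A₂ (bb j) - A₂ y) - (fbar y - fbar x) := by
      rw [hfx, hfy]; abel
    have e2 : a i - bb j = (a i - x) - (bb j - y) - (y - x) := by abel
    rw [e1, e2]
    exact norm_sub_sub_eq_of_inner _ _ _ _ _ _ (hαα i) (hββ j) hww (E1 i hi) (E2 j hj)
      (E3 i hi j hj)
  -- build the global affine isometry on the union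
  have ht₁ne : t₁.Nonempty := Finset.nonempty_of_ne_empty (by
    intro h; rw [h] at hw₁1'; simp at hw₁1')
  obtain ⟨i₀, hi₀⟩ := ht₁ne
  haveI : Nonempty (↥t₁ ⊕ ↥t₂) := ⟨Sum.inl ⟨i₀, hi₀⟩⟩
  set P : ↥t₁ ⊕ ↥t₂ → EuclideanSpace ℝ (Fin (n+1)) :=
    Sum.elim (fun i => a i.1) (fun j => bb j.1) with hP
  set Q : ↥t₁ ⊕ ↥t₂ → EuclideanSpace ℝ (Fin (n+1)) :=
    Sum.elim (fun i => A₁ (a i.1) + b₁) (fun j => A₂ (bb j.1) + b₂) with hQ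
  have hPQ : ∀ i j, ‖Q i - Q j‖ = ‖P i - P j‖ := by
    rintro (⟨i, hi⟩ | ⟨j, hj⟩) (⟨i', hi'⟩ | ⟨j', hj'⟩) <;>
      simp only [hP, hQ, Sum.elim_inl, Sum.elim_inr]
    · rw [add_sub_add_right_eq_sub, ← map_sub, A₁.norm_map]
    · exact hcross i hi j' hj'
    · rw [norm_sub_rev, norm_sub_rev (bb j)]
      exact hcross i' hi' j hj
    · rw [add_sub_add_right_eq_sub, ← map_sub, A₂.norm_map]
  obtain ⟨A, b, hAb⟩ := exists_affine_isometry_extension P Q hPQ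
  set H : Set (EuclideanSpace ℝ (Fin (n+1))) := (a '' ↑t₁) ∪ (bb '' ↑t₂) with hH
  have hHK : H ⊆ K := by
    rintro h (⟨i, hi, rfl⟩ | ⟨j, hj, rfl⟩)
    · exact hH₁K (haH' i hi)
    · exact hH₂K (hbH' j hj)
  have hwit : ∀ h ∈ H, f h = A h + b := by
    rintro h (⟨i, hi, rfl⟩ | ⟨j, hj, rfl⟩)
    · have := hAb (Sum.inl ⟨i, hi⟩)
      simp only [hP, hQ, Sum.elim_inl] at this
      rw [hw₁ _ (haH' i hi), this]
    · have := hAb (Sum.inr ⟨j, hj⟩)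
      simp only [hP, hQ, Sum.elim_inr] at this
      rw [hw₂ _ (hbH' j hj), this]
  have hxH : x ∈ convexHull ℝ H := by
    rw [← hxa', ← Finset.centerMass_eq_of_sum_1 _ _ hw₁1']
    exact Finset.centerMass_mem_convexHull t₁ (fun i hi => (hw₁pos i hi).le)
      (by rw [hw₁1']; norm_num) (fun i hi => Or.inl ⟨i, hi, rfl⟩)
  have hyH : y ∈ convexHull ℝ H := by
    rw [← hyb', ← Finset.centerMass_eq_of_sum_1 _ _ hw₂1']
    exact Finset.centerMass_mem_convexHull t₂ (fun j hj => (hw₂pos j hj).le)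
      (by rw [hw₂1']; norm_num) (fun j hj => Or.inr ⟨j, hj, rfl⟩)
  exact ((convex_convexHull ℝ H).segment_subset hxH hyH).trans
    (convexHull_subset_CfK hHK A b hwit)

theorem stmt5 (n : ℕ) (K : Set (EuclideanSpace ℝ (Fin (n+1)))) (hK : IsCompact K)
    (f : EuclideanSpace ℝ (Fin (n+1)) → EuclideanSpace ℝ (Fin (n+1)))
    (hf : LipschitzOnWith 1 f K)
    (fbar : EuclideanSpace ℝ (Fin (n+1)) → EuclideanSpace ℝ (Fin (n+1)))
    (hfbarLip : LipschitzOnWith 1 fbar (CfK n f K))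
    (hfbarExt : Set.EqOn fbar f K) :
    (∀ x ∈ CfK n f K, ∀ y ∈ CfK n f K,
        ‖fbar x - fbar y‖ = ‖x - y‖ → segment ℝ x y ⊆ CfK n f K) ∧
    CfK n fbar (CfK n f K) = CfK n f K := by
  classical
  have part1 := segment_subset_CfK n K f fbar hfbarLip hfbarExt
  refine ⟨part1, ?_⟩
  have hd : ∀ a ∈ CfK n f K, ∀ b ∈ CfK n f K, dist (fbar a) (fbar b) ≤ dist a b := by
    intro a ha b hb
    have := lipschitzOnWith_iff_dist_le_mul.mp hfbarLip a ha b hb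
    simpa using this
  have hKC : K ⊆ CfK n f K := by
    intro k hk
    refine convexHull_subset_CfK (H := {k}) (by simpa using hk)
      (LinearIsometry.id) (f k - k) ?_ (subset_convexHull ℝ _ rfl)
    intro z hz
    rw [Set.mem_singleton_iff] at hz
    subst hz
    simp
  apply Set.Subset.antisymm
  · -- CfK n fbar (CfK n f K) ⊆ CfK n f K
    intro z hz
    obtain ⟨H', ⟨hH'C, A, b, hw⟩, hzH'⟩ := mem_CfK_iff.mp hz
    -- for every finite subset S of H', convexHull S ⊆ CfK n f K
    have claim : ∀ S : Finset (EuclideanSpace ℝ (Fin (n+1))),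
        ↑S ⊆ H' → convexHull ℝ (↑S : Set _) ⊆ CfK n f K := by
      intro S
      induction S using Finset.induction_on with
      | empty => intro _; simp
      | @insert zz S hzz ih =>
        intro hsub
        have hS' : (↑S : Set _) ⊆ H' :=
          (Finset.coe_subset.mpr (Finset.subset_insert zz S)).trans hsub
        have hzzH' : zz ∈ H' := hsub (by simp)
        have hzzC : zz ∈ CfK n f K := hH'C hzzH'
        rcases S.eq_empty_or_nonempty with rfl | hSne
        · intro p hp
          have hset : (↑(insert zz (∅ : Finset (EuclideanSpace ℝ (Fin (n+1))))) : Set _)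
              = {zz} := by simp
          rw [hset, convexHull_singleton, Set.mem_singleton_iff] at hp
          subst hp; exact hzzC
        · rw [Finset.coe_insert, convexHull_insert (Finset.coe_nonempty.mpr hSne)]
          rintro p hp
          rw [mem_convexJoin] at hp
          obtain ⟨aa, haa, qq, hqq, hpseg⟩ := hp
          rw [Set.mem_singleton_iff] at haa
          rw [haa] at hpseg
          have hqqC : qq ∈ CfK n f K := ih hS' hqq
          have hqqhull : qq ∈ convexHull ℝ H' := convexHull_mono hS' hqq
          have hfqq : fbar qq = A qq + b :=
            lipschitz_eq_affine_on_convexHull hd hH'C A b hw hqqhull hqqC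
          have hfzz : fbar zz = A zz + b := hw _ hzzH'
          have hn : ‖fbar zz - fbar qq‖ = ‖zz - qq‖ := by
            rw [hfzz, hfqq, add_sub_add_right_eq_sub, ← map_sub, A.norm_map]
          exact part1 zz hzzC qq hqqC hn hpseg
    rw [convexHull_eq] at hzH'
    obtain ⟨ι, t, w, zf, h0, h1, hmem, hc⟩ := hzH'
    have hzhull : z ∈ convexHull ℝ (↑(t.image zf) : Set _) := by
      rw [← hc]
      exact Finset.centerMass_mem_convexHull t h0 (by rw [h1]; norm_num)
        (fun i hi => Finset.mem_coe.mpr (Finset.mem_image_of_mem zf hi))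
    refine claim (t.image zf) ?_ hzhull
    intro e he
    simp only [Finset.coe_image, Set.mem_image, Finset.mem_coe] at he
    obtain ⟨i, hi, rfl⟩ := he
    exact hmem i hi
  · -- CfK n f K ⊆ CfK n fbar (CfK n f K)
    intro z hz
    obtain ⟨H, ⟨hHK, A, b, hw⟩, hzH⟩ := mem_CfK_iff.mp hz
    refine convexHull_subset_CfK (f := fbar) (K := CfK n f K)
      (fun h hh => hKC (hHK hh)) A b ?_ hzH
    intro h hh
    rw [hfbarExt (hHK hh)]
    exact hw h hh
end

section
/- Let K ⊂ ℝⁿ be compact and f : K → ℝⁿ 1-Lipschitz. If for every x ∉ K there exists p_x ∈ ℝⁿ with |p_x - f(y)| < |x - y| for all y ∈ K, then f admits a 1-Lipschitz extension h : ℝⁿ → ℝⁿ such that h|_K = f and Lip(h|_A) < 1 for every compact set A ⊂ ℝⁿ \ K. -/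
/-!
Kirszbraun's theorem (a 1-Lipschitz map from a subset of a real inner product space into a
finite-dimensional one extends to the whole space) is proved in the classical way: Zorn's lemma
reduces it to extending to one more point `x`, compactness of closed balls reduces that to
finitely many points, and there a minimiser `q` of `max_i (‖q - f aᵢ‖² - ‖x - aᵢ‖²)` is a
convex combination of the active `f aᵢ`; comparing weighted variances of the `f aᵢ` and of the
`aᵢ` shows that this maximum is `≤ 0`.

For the theorem itself, the strict inequality at `x ∉ K` leaves room to extend `f` by the constant
`p_x` on a small ball around `x`. Countably many such balls cover `Kᶜ`, and `h = ∑ 2⁻ⁿ⁻¹ uₙ` is the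
average of the corresponding extensions. Near any point of `Kᶜ` one `uₙ` is constant, which makes
`h` contract by the factor `1 - 2⁻ⁿ⁻¹` near the diagonal and strictly off it; compactness of
`A × A` turns this into a uniform Lipschitz constant `< 1` on `A`.
-/

open Set Filter Topology Metric RealInnerProductSpace

section Kirszbraun

variable {E F : Type*} [NormedAddCommGroup E] [InnerProductSpace ℝ E]
  [NormedAddCommGroup F] [InnerProductSpace ℝ F]

theorem sum_sum_mul_norm_sub_sq {ι : Type*} [Fintype ι] {w : ι → ℝ} (hw : ∑ i, w i = 1)
    (u : ι → E) :
    ∑ i, ∑ j, w i * w j * ‖u i - u j‖ ^ 2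
      = 2 * (∑ i, w i * ‖u i‖ ^ 2 - ‖∑ i, w i • u i‖ ^ 2) := by
  have hsq : ‖∑ i, w i • u i‖ ^ 2 = ∑ i, ∑ j, w i * w j * ⟪u i, u j⟫ := by
    simp only [← real_inner_self_eq_norm_sq, sum_inner, inner_sum, real_inner_smul_left,
      real_inner_smul_right, mul_assoc]
    rw [Finset.sum_comm]
    exact Finset.sum_congr rfl fun i _ => Finset.sum_congr rfl fun j _ => by ring
  have hexp : ∀ i j, w i * w j * ‖u i - u j‖ ^ 2 = w j * (w i * ‖u i‖ ^ 2)
      + w i * (w j * ‖u j‖ ^ 2) - 2 * (w i * w j * ⟪u i, u j⟫) := by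
    intro i j; rw [norm_sub_sq_real]; ring
  simp only [hexp, hsq, Finset.sum_sub_distrib, Finset.sum_add_distrib, ← Finset.sum_mul,
    ← Finset.mul_sum, hw]
  ring

theorem sum_mul_norm_sub_sq_le {ι : Type*} [Fintype ι] {w : ι → ℝ} (hw₀ : ∀ i, 0 ≤ w i)
    (hw : ∑ i, w i = 1) (a : ι → E) (b : ι → F)
    (hab : ∀ i j, ‖b i - b j‖ ≤ ‖a i - a j‖) (x : E) :
    ∑ i, w i * ‖∑ j, w j • b j - b i‖ ^ 2 ≤ ∑ i, w i * ‖x - a i‖ ^ 2 := by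
  have hb := sum_sum_mul_norm_sub_sq hw fun i => ∑ j, w j • b j - b i
  have ha := sum_sum_mul_norm_sub_sq hw fun i => x - a i
  have hcenter : ∑ i, w i • (∑ j, w j • b j - b i) = 0 := by
    simp [smul_sub, Finset.sum_sub_distrib, ← Finset.sum_smul, hw]
  simp only [sub_sub_sub_cancel_left, hcenter, norm_zero] at ha hb
  have hcomp : ∑ i, ∑ j, w i * w j * ‖b j - b i‖ ^ 2
      ≤ ∑ i, ∑ j, w i * w j * ‖a j - a i‖ ^ 2 := by
    gcongr with i _ j _
    · exact mul_nonneg (hw₀ i) (hw₀ j)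
    · exact hab j i
  linarith [sq_nonneg ‖∑ i, w i • (x - a i)‖]

theorem exists_forall_norm_add_smul_sub_lt {D : Set F} (hne : D.Nonempty)
    (hcomplete : IsComplete D) (hD : Convex ℝ D) {q : F} (hq : q ∉ D) :
    ∃ v : F, ∀ y ∈ D, ∀ t ∈ Ioc (0 : ℝ) 1, ‖q + t • v - y‖ < ‖q - y‖ := by
  obtain ⟨P, hP, hPmin⟩ := exists_norm_eq_iInf_of_complete_convex hne hcomplete hD q
  have hobtuse := (norm_eq_iInf_iff_real_inner_le_zero hD hP).1 hPmin
  have hd : 0 < ‖q - P‖ := norm_pos_iff.2 (sub_ne_zero.2 fun h => hq (h ▸ hP))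
  refine ⟨P - q, fun y hy t ⟨ht₀, ht₁⟩ => ?_⟩
  have hmove : q + t • (P - q) - y = (1 - t) • (q - P) - (y - P) := by module
  have hsplit : q - y = (q - P) - (y - P) := by abel
  have hobtuse_y := hobtuse y hy
  rw [hmove, hsplit]
  generalize q - P = d at hd hobtuse_y ⊢
  generalize y - P = e at hobtuse_y ⊢
  apply lt_of_pow_lt_pow_left₀ 2 (norm_nonneg _)
  rw [norm_sub_sq_real, norm_sub_sq_real, norm_smul, real_inner_smul_left, Real.norm_eq_abs,
    abs_of_nonneg (by linarith)]
  nlinarith [mul_pos ht₀ (mul_pos hd hd)]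

theorem mem_convexHull_of_forall_exists_le {ι : Type*} [Finite ι] (y : ι → F) (c : ι → ℝ)
    {q : F} {m : ℝ} (hq : ∀ i, ‖q - y i‖ ^ 2 - c i ≤ m)
    (hmin : ∀ p, ∃ i, m ≤ ‖p - y i‖ ^ 2 - c i) :
    q ∈ convexHull ℝ (y '' {i | ‖q - y i‖ ^ 2 - c i = m}) := by
  set A := {i | ‖q - y i‖ ^ 2 - c i = m}
  by_contra hqA
  have hAne : A.Nonempty := by
    obtain ⟨i, hi⟩ := hmin q
    exact ⟨i, le_antisymm (hq i) hi⟩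
  have hcompact : IsCompact (convexHull ℝ (y '' A)) :=
    ((Set.toFinite A).image y).isCompact_convexHull (𝕜 := ℝ)
  obtain ⟨v, hv⟩ := exists_forall_norm_add_smul_sub_lt (hAne.image y).convexHull
    hcompact.isComplete (convex_convexHull ℝ _) hqA
  have hdecrease : ∀ i, ∀ᶠ t in 𝓝[>] (0 : ℝ), ‖q + t • v - y i‖ ^ 2 - c i < m := by
    intro i
    by_cases hi : i ∈ A
    · filter_upwards [Ioc_mem_nhdsGT zero_lt_one] with t ht
      have := hv (y i) (subset_convexHull ℝ _ (mem_image_of_mem y hi)) t ht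
      rw [← show ‖q - y i‖ ^ 2 - c i = m from hi]
      gcongr
    · have hlim : Tendsto (fun t : ℝ => ‖q + t • v - y i‖ ^ 2 - c i) (𝓝 0)
          (𝓝 (‖q - y i‖ ^ 2 - c i)) := by
        have hcont : Continuous fun t : ℝ => ‖q + t • v - y i‖ ^ 2 - c i := by fun_prop
        simpa using hcont.tendsto 0
      exact (hlim.eventually_lt_const (lt_of_le_of_ne (hq i) hi)).filter_mono nhdsWithin_le_nhds
  obtain ⟨t, ht⟩ := (eventually_all.2 hdecrease).exists
  obtain ⟨i, hi⟩ := hmin (q + t • v)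
  exact (hi.trans_lt (ht i)).false

theorem exists_forall_dist_le_of_finite [FiniteDimensional ℝ F] {ι : Type*} [Finite ι]
    (a : ι → E) (b : ι → F) (hab : ∀ i j, dist (b i) (b j) ≤ dist (a i) (a j)) (x : E) :
    ∃ q, ∀ i, dist q (b i) ≤ dist x (a i) := by
  cases isEmpty_or_nonempty ι
  · exact ⟨0, isEmptyElim⟩
  cases nonempty_fintype ι
  inhabit ι
  set G : F → ℝ := fun p =>
    Finset.univ.sup' Finset.univ_nonempty fun i => ‖p - b i‖ ^ 2 - ‖x - a i‖ ^ 2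
  have hG : ∀ p i, ‖p - b i‖ ^ 2 - ‖x - a i‖ ^ 2 ≤ G p := fun p i =>
    Finset.le_sup' (fun i => ‖p - b i‖ ^ 2 - ‖x - a i‖ ^ 2) (Finset.mem_univ i)
  have hcoercive : Tendsto G (cocompact F) atTop := by
    refine tendsto_atTop_mono (fun p => hG p default) ?_
    have hdist := (tendsto_pow_atTop two_ne_zero).comp
      (tendsto_dist_right_cocompact_atTop (b default))
    simp only [Function.comp_def, dist_eq_norm] at hdist
    exact (tendsto_atTop_add_const_right _ (-‖x - a default‖ ^ 2) hdist).congr fun p =>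
      (sub_eq_add_neg _ _).symm
  obtain ⟨q, hq⟩ := (Continuous.finset_sup'_apply _ fun i _ => by fun_prop).exists_forall_le
    hcoercive
  have hmin : ∀ p, ∃ i, G q ≤ ‖p - b i‖ ^ 2 - ‖x - a i‖ ^ 2 := fun p => by
    obtain ⟨i, -, hi⟩ := Finset.exists_mem_eq_sup' Finset.univ_nonempty
      fun i => ‖p - b i‖ ^ 2 - ‖x - a i‖ ^ 2
    exact ⟨i, hi ▸ hq p⟩
  obtain ⟨κ, _, w, z, hw₀, hw₁, hz, hqz⟩ := mem_convexHull_iff_exists_fintype.1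
    (mem_convexHull_of_forall_exists_le b (fun i => ‖x - a i‖ ^ 2) (hG q) hmin)
  choose j hj_active hjz using hz
  have hcenter : ∑ k, w k • b (j k) = q := by simpa only [hjz] using hqz
  have hweighted := sum_mul_norm_sub_sq_le hw₀ hw₁ (a ∘ j) (b ∘ j)
    (fun k l => by simpa only [Function.comp_apply, dist_eq_norm] using hab (j k) (j l)) x
  simp only [Function.comp_apply, hcenter] at hweighted
  have hactive : ∑ k, w k * ‖q - b (j k)‖ ^ 2 = ∑ k, w k * ‖x - a (j k)‖ ^ 2 + G q := by
    rw [← one_mul (G q), ← hw₁, Finset.sum_mul, ← Finset.sum_add_distrib]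
    refine Finset.sum_congr rfl fun k _ => ?_
    rw [← (hj_active k : ‖q - b (j k)‖ ^ 2 - ‖x - a (j k)‖ ^ 2 = G q)]
    ring
  refine ⟨q, fun i => ?_⟩
  rw [dist_eq_norm, dist_eq_norm]
  exact le_of_pow_le_pow_left₀ two_ne_zero (norm_nonneg _) (by linarith [hG q i])

theorem exists_forall_dist_le [FiniteDimensional ℝ F] {ι : Type*} (a : ι → E) (b : ι → F)
    (hab : ∀ i j, dist (b i) (b j) ≤ dist (a i) (a j)) (x : E) :
    ∃ q, ∀ i, dist q (b i) ≤ dist x (a i) := by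
  classical
  cases isEmpty_or_nonempty ι
  · exact ⟨0, isEmptyElim⟩
  inhabit ι
  obtain ⟨q, -, hq⟩ :=
    (isCompact_closedBall (b default) (dist x (a default))).inter_iInter_nonempty
    (fun i => closedBall (b i) (dist x (a i))) (fun i => isClosed_closedBall) fun u => by
      obtain ⟨q, hq⟩ := exists_forall_dist_le_of_finite (ι := ↥(insert default u))
        (fun i => a i) (fun i => b i) (fun i j => hab i j) x
      exact ⟨q, hq ⟨default, Finset.mem_insert_self _ _⟩,
        mem_iInter₂.2 fun i hi => hq ⟨i, Finset.mem_insert_of_mem hi⟩⟩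
  exact ⟨q, fun i => mem_iInter.1 hq i⟩

theorem LipschitzOnWith.kirszbraun [FiniteDimensional ℝ F] {s : Set E} {f : E → F}
    (hf : LipschitzOnWith 1 f s) : ∃ g : E → F, LipschitzWith 1 g ∧ EqOn f g s := by
  set 𝒮 : Set (Set (E × F)) := {G | ∀ p ∈ G, ∀ p' ∈ G, dist p.2 p'.2 ≤ dist p.1 p'.1}
  have hgraph : (fun y => (y, f y)) '' s ∈ 𝒮 := by
    rintro _ ⟨y, hy, rfl⟩ _ ⟨y', hy', rfl⟩
    simpa using hf.dist_le_mul y hy y' hy'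
  have hchain : ∀ c ⊆ 𝒮, IsChain (· ⊆ ·) c → ⋃₀ c ∈ 𝒮 := by
    rintro c hc𝒮 hc p ⟨G, hG, hp⟩ p' ⟨G', hG', hp'⟩
    rcases hc.total hG hG' with h | h
    · exact hc𝒮 hG' p (h hp) p' hp'
    · exact hc𝒮 hG p hp p' (h hp')
  obtain ⟨M, hfM, hM⟩ := zorn_subset_nonempty 𝒮
    (fun c hc𝒮 hc _ => ⟨⋃₀ c, hchain c hc𝒮 hc, fun _ => subset_sUnion_of_mem⟩) _ hgraph
  have htotal : ∀ x, ∃ y, (x, y) ∈ M := fun x => by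
    obtain ⟨q, hq⟩ := exists_forall_dist_le (fun p : M => p.1.1) (fun p : M => p.1.2)
      (fun p p' => hM.1 p p.2 p' p'.2) x
    have hext : insert (x, q) M ∈ 𝒮 := by
      rintro p (rfl | hp) p' (rfl | hp')
      · simp
      · exact hq ⟨p', hp'⟩
      · simpa [dist_comm] using hq ⟨p, hp⟩
      · exact hM.1 p hp p' hp'
    exact ⟨q, hM.2 hext (subset_insert _ _) (mem_insert _ _)⟩
  choose g hg using htotal
  refine ⟨g, LipschitzWith.of_dist_le_mul fun x y => by simpa using hM.1 _ (hg x) _ (hg y),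
    fun y hy => ?_⟩
  have := hM.1 _ (hfM ⟨y, hy, rfl⟩) _ (hg y)
  exact dist_le_zero.1 (by simpa using this)

theorem LipschitzOnWith.exists_extension_eqOn_ball [FiniteDimensional ℝ F] {K : Set E}
    (hK : IsCompact K) {f : E → F} (hf : LipschitzOnWith 1 f K) {x : E} {p : F}
    (hp : ∀ y ∈ K, dist p (f y) < dist x y) :
    ∃ r > 0, ∃ H : E → F, LipschitzWith 1 H ∧ EqOn f H K ∧ ∀ z ∈ ball x r, H z = p := by
  classical
  obtain ⟨ε, hε, hεK⟩ := hK.exists_forall_le' (f := fun y => dist x y - dist p (f y))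
    (by have := hf.continuousOn; fun_prop) fun y hy => sub_pos.2 (hp y hy)
  have hfar : ∀ z ∈ ball x ε, ∀ y ∈ K, dist p (f y) < dist z y := fun z hz y hy => by
    have := hεK y hy
    linarith [dist_triangle x z y, mem_ball'.1 hz]
  have hnotK : ∀ z ∈ ball x ε, z ∉ K := fun z hz hzK =>
    (dist_nonneg.trans_lt (hfar z hz z hzK)).ne (dist_self z).symm
  set g := K.piecewise f fun _ => p
  have hg : LipschitzOnWith 1 g (K ∪ ball x ε) := by
    refine LipschitzOnWith.of_dist_le_mul fun y hy z hz => ?_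
    rcases hy with hyK | hyB <;> rcases hz with hzK | hzB
    · simpa [g, hyK, hzK] using hf.dist_le_mul y hyK z hzK
    · simpa [g, hyK, hnotK z hzB, dist_comm] using (hfar z hzB y hyK).le
    · simpa [g, hzK, hnotK y hyB] using (hfar y hyB z hzK).le
    · simp [g, hnotK y hyB, hnotK z hzB]
  obtain ⟨H, hH, hgH⟩ := hg.kirszbraun
  refine ⟨ε, hε, H, hH, fun y hy => ?_, fun z hz => ?_⟩
  · simpa [g, hy] using hgH (Or.inl hy)
  · simpa [g, hnotK z hz] using (hgH (Or.inr hz)).symm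

theorem LipschitzOnWith.exists_seq_extension_eventually_const [FiniteDimensional ℝ F]
    [SecondCountableTopology E] {K : Set E} (hK : IsCompact K) {f : E → F}
    (hf : LipschitzOnWith 1 f K) (hb : ∀ x ∉ K, ∃ p, ∀ y ∈ K, dist p (f y) < dist x y) :
    ∃ u : ℕ → E → F, (∀ n, LipschitzWith 1 (u n)) ∧ (∀ n, EqOn f (u n) K) ∧
      ∀ x ∉ K, ∃ n, ∀ᶠ y in 𝓝 x, u n y = u n x := by
  choose p hp using fun x : ↥Kᶜ => hb x x.2
  choose r hr H hH hfH hHp using fun x : ↥Kᶜ => hf.exists_extension_eqOn_ball hK (hp x)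
  obtain ⟨T, hTc, hTcover⟩ := TopologicalSpace.isOpen_iUnion_countable
    (fun x : ↥Kᶜ => ball (x : E) (r x)) fun _ => isOpen_ball
  have hcover : ∀ x ∉ K, ∃ i ∈ T, x ∈ ball (i : E) (r i) := fun x hx => by
    have hx' : x ∈ ⋃ i : ↥Kᶜ, ball (i : E) (r i) :=
      mem_iUnion.2 ⟨⟨x, hx⟩, mem_ball_self (hr _)⟩
    simpa only [← hTcover, mem_iUnion, exists_prop] using hx'
  rcases T.eq_empty_or_nonempty with rfl | hT
  · obtain ⟨g, hg, hfg⟩ := hf.kirszbraun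
    exact ⟨fun _ => g, fun _ => hg, fun _ => hfg, fun x hx => by simpa using hcover x hx⟩
  obtain ⟨e, rfl⟩ := hTc.exists_eq_range hT
  refine ⟨fun n => H (e n), fun n => hH _, fun n => hfH _, fun x hx => ?_⟩
  obtain ⟨_, ⟨n, rfl⟩, hxn⟩ := hcover x hx
  refine ⟨n, ?_⟩
  filter_upwards [isOpen_ball.mem_nhds hxn] with y hy
  rw [hHp _ y hy, hHp _ x hxn]

end Kirszbraun

section Combination

variable {α F ι : Type*} [PseudoMetricSpace α] [NormedAddCommGroup F] [NormedSpace ℝ F]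
  {w : ι → ℝ} {u : ι → α → F}

theorem summable_smul_of_lipschitzWith [CompleteSpace F] (hw₀ : ∀ i, 0 ≤ w i) (hw : Summable w)
    (hu : ∀ i, LipschitzWith 1 (u i)) {z₀ : α} {c : F} (hc : ∀ i, u i z₀ = c) (z : α) :
    Summable fun i => w i • u i z := by
  refine (hw.mul_right (dist z z₀ + ‖c‖)).of_norm_bounded fun i => ?_
  rw [norm_smul, Real.norm_of_nonneg (hw₀ i)]
  refine mul_le_mul_of_nonneg_left ?_ (hw₀ i)
  calc ‖u i z‖ ≤ dist (u i z) (u i z₀) + ‖u i z₀‖ := by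
        simpa [dist_eq_norm] using norm_le_norm_sub_add (u i z) (u i z₀)
    _ ≤ dist z z₀ + ‖c‖ :=
        add_le_add (by simpa using (hu i).dist_le_mul z z₀) (by rw [hc])

theorem dist_tsum_smul_le (hw₀ : ∀ i, 0 ≤ w i) (hw : HasSum w 1)
    (hu : ∀ i, LipschitzWith 1 (u i)) (hsum : ∀ z, Summable fun i => w i • u i z) (a b : α)
    (j : ι) : dist (∑' i, w i • u i a) (∑' i, w i • u i b)
      ≤ (1 - w j) * dist a b + w j * dist (u j a) (u j b) := by
  have hshort : ∀ i, w i * dist (u i a) (u i b) ≤ w i * dist a b := fun i =>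
    mul_le_mul_of_nonneg_left (by simpa using (hu i).dist_le_mul a b) (hw₀ i)
  have hbound : Summable fun i => w i * dist a b := hw.summable.mul_right _
  have hs : Summable fun i => w i * dist (u i a) (u i b) :=
    hbound.of_nonneg_of_le (fun i => mul_nonneg (hw₀ i) dist_nonneg) hshort
  have hgap := (hbound.sub hs).le_tsum j fun i _ => sub_nonneg.2 (hshort i)
  rw [hbound.tsum_sub hs, tsum_mul_right, hw.tsum_eq, one_mul] at hgap
  have hnorm : ∀ i, ‖w i • (u i a - u i b)‖ = w i * dist (u i a) (u i b) := fun i => by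
    rw [norm_smul, Real.norm_of_nonneg (hw₀ i), dist_eq_norm]
  calc dist (∑' i, w i • u i a) (∑' i, w i • u i b) = ‖∑' i, w i • (u i a - u i b)‖ := by
        simp only [dist_eq_norm, smul_sub, (hsum a).tsum_sub (hsum b)]
    _ ≤ ∑' i, w i * dist (u i a) (u i b) := by
        refine (norm_tsum_le_tsum_norm (f := fun i => w i • (u i a - u i b)) ?_).trans_eq ?_ <;>
          simp only [hnorm, hs]
    _ ≤ _ := by linarith

end Combination

theorem LipschitzWith.dist_lt_of_eventually_eq {E β : Type*} [NormedAddCommGroup E]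
    [NormedSpace ℝ E] [PseudoMetricSpace β] {g : E → β} (hg : LipschitzWith 1 g) {a b : E}
    (hloc : ∀ᶠ y in 𝓝 a, g y = g a) (hab : a ≠ b) : dist (g a) (g b) < dist a b := by
  have hline : ∀ᶠ t in 𝓝[>] (0 : ℝ), g (AffineMap.lineMap a b t) = g a :=
    ((AffineMap.lineMap_continuous.tendsto' 0 a (by simp)).eventually hloc).filter_mono
      nhdsWithin_le_nhds
  obtain ⟨t, hta, ht₀, ht₁⟩ := (hline.and (Ioo_mem_nhdsGT zero_lt_one)).exists
  calc dist (g a) (g b) = dist (g (AffineMap.lineMap a b t)) (g b) := by rw [hta]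
    _ ≤ dist (AffineMap.lineMap a b t) b := by
        simpa only [NNReal.coe_one, one_mul] using hg.dist_le_mul (AffineMap.lineMap a b t) b
    _ = (1 - t) * dist a b := by
        rw [dist_lineMap_right, Real.norm_of_nonneg (by linarith)]
    _ < dist a b := by nlinarith [dist_pos.2 hab]

theorem IsCompact.exists_lipschitzOnWith_lt_one {α β : Type*} [PseudoMetricSpace α]
    [PseudoMetricSpace β] {A : Set α} (hA : IsCompact A) {h : α → β} (hh : Continuous h)
    (hdiag : ∀ a ∈ A, ∃ c < 1, ∀ᶠ p in 𝓝 (a, a), dist (h p.1) (h p.2) ≤ c * dist p.1 p.2)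
    (hoff : ∀ a ∈ A, ∀ b ∈ A, a ≠ b → dist (h a) (h b) < dist a b) :
    ∃ L < 1, LipschitzOnWith L h A := by
  set U : Iio (1 : ℝ) → Set (α × α) := fun c =>
    interior {p | dist (h p.1) (h p.2) ≤ (c : ℝ) * dist p.1 p.2}
  have hcover : A ×ˢ A ⊆ ⋃ c, U c := by
    rintro ⟨a, b⟩ ⟨ha, hb⟩
    obtain ⟨c, hc, hev⟩ :
        ∃ c < 1, ∀ᶠ p in 𝓝 (a, b), dist (h p.1) (h p.2) ≤ c * dist p.1 p.2 := by
      by_cases hab : a = b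
      · exact hab ▸ hdiag a ha
      have hlt := hoff a ha b hb hab
      have hpos : 0 < dist a b := dist_nonneg.trans_lt hlt
      obtain ⟨c, hc₀, hc₁⟩ := exists_between ((div_lt_one hpos).2 hlt)
      refine ⟨c, hc₁, (ContinuousAt.eventually_lt (by fun_prop) (by fun_prop) ?_).mono
        fun p hp => hp.le⟩
      exact (div_lt_iff₀ hpos).1 hc₀
    exact mem_iUnion.2 ⟨⟨c, hc⟩, mem_interior_iff_mem_nhds.2 hev⟩
  have hmono : Monotone U := fun c c' hcc' => interior_mono fun p hp =>
    hp.trans (mul_le_mul_of_nonneg_right (Subtype.mono_coe _ hcc') dist_nonneg)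
  have : Nonempty (Iio (1 : ℝ)) := ⟨⟨0, mem_Iio.2 zero_lt_one⟩⟩
  obtain ⟨c, hc⟩ := (hA.prod hA).elim_directed_cover U (fun _ => isOpen_interior) hcover
    hmono.directed_le
  exact ⟨Real.toNNReal c, Real.toNNReal_lt_one.2 c.2, LipschitzOnWith.of_dist_le'
    fun x hx y hy => interior_subset (s := {p : α × α | dist (h p.1) (h p.2) ≤ c * dist p.1 p.2})
      (hc (mk_mem_prod hx hy))⟩

section Extension

variable {E F : Type*} [NormedAddCommGroup E] [NormedAddCommGroup F]

def IsLocallyStrictlyShortExtension (h f : E → F) (K : Set E) : Prop :=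
  LipschitzWith 1 h ∧ EqOn h f K ∧ ∀ A, IsCompact A → A ⊆ Kᶜ → ∃ L < 1, LipschitzOnWith L h A

theorem isLocallyStrictlyShortExtension_tsum [NormedSpace ℝ E] [NormedSpace ℝ F]
    [CompleteSpace F] {K : Set E} (hK : K.Nonempty) {f : E → F} {u : ℕ → E → F}
    (hu : ∀ n, LipschitzWith 1 (u n)) (hfu : ∀ n, EqOn f (u n) K)
    (hloc : ∀ x ∉ K, ∃ n, ∀ᶠ y in 𝓝 x, u n y = u n x) :
    IsLocallyStrictlyShortExtension (fun z => ∑' n : ℕ, (1 / 2 / 2 ^ n : ℝ) • u n z) f K := by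
  obtain ⟨y₀, hy₀⟩ := hK
  set w : ℕ → ℝ := fun n => 1 / 2 / 2 ^ n
  have hw : HasSum w 1 := hasSum_geometric_two' 1
  have hw₀ : ∀ n, 0 < w n := fun n => by positivity
  have hdist := dist_tsum_smul_le (fun n => (hw₀ n).le) hw hu <|
    summable_smul_of_lipschitzWith (fun n => (hw₀ n).le) hw.summable hu fun n => (hfu n hy₀).symm
  have hlip : LipschitzWith 1 fun z => ∑' n, w n • u n z := .of_dist_le_mul fun a b => by
    have hshort := (hu 0).dist_le_mul a b
    simp only [NNReal.coe_one, one_mul] at hshort ⊢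
    nlinarith [hdist a b 0, hw₀ 0]
  refine ⟨hlip, fun y hy => ?_, fun A hA hAK =>
    hA.exists_lipschitzOnWith_lt_one hlip.continuous (fun a ha => ?_) fun a ha b hb hab => ?_⟩
  · simp only [← hfu _ hy]
    rw [hw.summable.tsum_smul_const, hw.tsum_eq, one_smul]
  · obtain ⟨n, hn⟩ := hloc a (hAK ha)
    refine ⟨1 - w n, by linarith [hw₀ n], (hn.prodMk_nhds hn).mono fun p hp => ?_⟩
    simpa only [hp.1, hp.2, dist_self, mul_zero, add_zero] using hdist p.1 p.2 n
  · obtain ⟨n, hn⟩ := hloc a (hAK ha)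
    nlinarith [hdist a b n, hw₀ n, (hu n).dist_lt_of_eventually_eq hn hab]

end Extension

theorem stmt7 (n : ℕ) (K : Set (EuclideanSpace ℝ (Fin (n+1)))) (hK : IsCompact K)
    (f : EuclideanSpace ℝ (Fin (n+1)) → EuclideanSpace ℝ (Fin (n+1)))
    (hf : LipschitzOnWith 1 f K)
    (hb : ∀ x ∉ K, ∃ p : EuclideanSpace ℝ (Fin (n+1)), ∀ y ∈ K, ‖p - f y‖ < ‖x - y‖) :
    ∃ h : EuclideanSpace ℝ (Fin (n+1)) → EuclideanSpace ℝ (Fin (n+1)),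
      LipschitzWith 1 h ∧ Set.EqOn h f K ∧
      ∀ A : Set (EuclideanSpace ℝ (Fin (n+1))), IsCompact A → A ⊆ Kᶜ →
        ∃ L : NNReal, L < 1 ∧ LipschitzOnWith L h A := by
  rcases K.eq_empty_or_nonempty with rfl | hKne
  · exact ⟨0, (LipschitzWith.const 0).weaken zero_le_one, eqOn_empty _ _,
      fun A _ _ => ⟨0, zero_lt_one, (LipschitzWith.const 0).lipschitzOnWith⟩⟩
  obtain ⟨u, hu, hfu, hloc⟩ :=
    hf.exists_seq_extension_eventually_const hK (by simpa only [dist_eq_norm] using hb)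
  exact ⟨_, isLocallyStrictlyShortExtension_tsum hKne hu hfu hloc⟩
end

section
/- Let M be a connected smooth Riemannian manifold with continuous metric g and S ⊂ M path-connected. A 1-Lipschitz map f : M → ℝⁿ belongs to ⋂_{ε>0} 𝓘_ε(S) if and only if f is isometric on S, i.e., ℓ(f∘γ) = ℓ_g(γ) for every rectifiable curve γ : [0,1] → S. -/
/-!
Since `f` is 1-Lipschitz, `ℓ(f ∘ γ) ≤ ℓ(γ)` always. If `f` lies in every `𝓘_ε(S)`, apply the
defining inequality to the restriction of `γ` to `[a, b]`, reparametrized on `[0, 1]`, and let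
`ε → 0`: this gives `d(γ a, γ b) ≤ d_S(γ a, γ b) ≤ ℓ(f ∘ γ|[a,b])`, and summing over a partition
gives `ℓ(γ) ≤ ℓ(f ∘ γ)`. Conversely, if `ℓ(f ∘ γ) = ℓ(γ)`, then `0 < d_S(x, y) ≤ ℓ(γ) < ∞`, so
`(1 - ε) d_S(x, y) < (1 + ε) ℓ(γ)`.
-/

open scoped ENNReal

/-- A rectifiable curve in `S` from `x` to `y`, parametrized on `[0,1]`. -/
def IsCurve {M : Type*} [MetricSpace M] (S : Set M) (x y : M) (γ : ℝ → M) : Prop :=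
  ContinuousOn γ (Set.Icc 0 1) ∧ Set.MapsTo γ (Set.Icc 0 1) S ∧
    γ 0 = x ∧ γ 1 = y ∧ eVariationOn γ (Set.Icc 0 1) ≠ ⊤

/-- The intrinsic distance in `S` : the infimum of lengths of rectifiable curves
in `S` joining `x` to `y`. -/
noncomputable def dS {M : Type*} [MetricSpace M] (S : Set M) (x y : M) : ℝ≥0∞ :=
  ⨅ (γ : ℝ → M) (_ : IsCurve S x y γ), eVariationOn γ (Set.Icc 0 1)

/-- The condition defining `F_ε(x,y,S)` for a map `f : M → ℝⁿ`:
`ℓ(f∘γ) + ε ℓ(γ) > (1-ε) d_S(x,y)` for every rectifiable curve `γ` in `S`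
from `x` to `y`. -/
def MemF {M : Type*} [MetricSpace M] (n : ℕ) (ε : ℝ) (S : Set M) (x y : M)
    (f : M → EuclideanSpace ℝ (Fin n)) : Prop :=
  ∀ γ : ℝ → M, IsCurve S x y γ →
    ENNReal.ofReal (1 - ε) * dS S x y <
      eVariationOn (f ∘ γ) (Set.Icc 0 1) + ENNReal.ofReal ε * eVariationOn γ (Set.Icc 0 1)

open Set Filter Topology

lemma eVariationOn_le_of_edist_le {α E F : Type*} [LinearOrder α] [PseudoEMetricSpace E]
    [PseudoEMetricSpace F] {g : α → E} {h : α → F} {s : Set α}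
    (H : ∀ a ∈ s, ∀ b ∈ s, a ≤ b → edist (g a) (g b) ≤ eVariationOn h (s ∩ Icc a b)) :
    eVariationOn g s ≤ eVariationOn h s := by
  refine iSup_le fun ⟨m, u, hu, us⟩ => ?_
  calc ∑ i ∈ Finset.range m, edist (g (u (i + 1))) (g (u i))
      ≤ ∑ i ∈ Finset.range m, eVariationOn h (s ∩ Icc (u i) (u (i + 1))) :=
        Finset.sum_le_sum fun i _ => by
          rw [edist_comm]; exact H _ (us i) _ (us (i + 1)) (hu i.le_succ)
    _ = eVariationOn h (s ∩ Icc (u 0) (u m)) := eVariationOn.sum h hu fun i _ _ => us i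
    _ ≤ eVariationOn h s := eVariationOn.mono h inter_subset_left

lemma eVariationOn_comp_lineMap {E : Type*} [PseudoEMetricSpace E] (g : ℝ → E) {a b : ℝ}
    (hab : a ≤ b) :
    eVariationOn (g ∘ AffineMap.lineMap (k := ℝ) a b) (Icc 0 1) = eVariationOn g (Icc a b) := by
  rw [eVariationOn.comp_eq_of_monotoneOn g _ ((AffineMap.lineMap_mono hab).monotoneOn _),
    ← segment_eq_image_lineMap, segment_eq_Icc hab]

lemma ENNReal.le_of_forall_pos_ofReal_one_sub_mul_lt {D L V : ℝ≥0∞} (hV : V ≠ ⊤)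
    (h : ∀ ε : ℝ, 0 < ε → ENNReal.ofReal (1 - ε) * D < L + ENNReal.ofReal ε * V) : D ≤ L := by
  have hlhs : Tendsto (fun ε : ℝ => ENNReal.ofReal (1 - ε) * D) (𝓝[>] 0) (𝓝 D) := by
    have : Tendsto (fun ε : ℝ => ENNReal.ofReal (1 - ε)) (𝓝[>] 0) (𝓝 1) := by
      simpa using ENNReal.tendsto_ofReal
        (((continuous_const.sub continuous_id).tendsto' (0 : ℝ) 1 (by simp)).mono_left
          nhdsWithin_le_nhds)
    simpa using ENNReal.Tendsto.mul_const this (Or.inl one_ne_zero)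
  have hrhs : Tendsto (fun ε : ℝ => L + ENNReal.ofReal ε * V) (𝓝[>] 0) (𝓝 L) := by
    have : Tendsto (fun ε : ℝ => ENNReal.ofReal ε) (𝓝[>] 0) (𝓝 0) := by
      simpa using ENNReal.tendsto_ofReal (tendsto_id.mono_left (nhdsWithin_le_nhds (a := (0 : ℝ))))
    simpa using tendsto_const_nhds.add (ENNReal.Tendsto.mul_const this (Or.inr hV))
  exact le_of_tendsto_of_tendsto hlhs hrhs
    (eventually_nhdsWithin_of_forall fun ε hε => (h ε hε).le)

section Curves

variable {M : Type*} [MetricSpace M] {S : Set M} {x y : M} {γ : ℝ → M}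

lemma edist_le_dS : edist x y ≤ dS S x y :=
  le_iInf₂ fun γ hγ => by
    rw [← hγ.2.2.1, ← hγ.2.2.2.1]
    exact eVariationOn.edist_le γ (left_mem_Icc.2 zero_le_one) (right_mem_Icc.2 zero_le_one)

lemma dS_le_eVariationOn (hγ : IsCurve S x y γ) : dS S x y ≤ eVariationOn γ (Icc 0 1) :=
  iInf₂_le γ hγ

lemma IsCurve.comp_lineMap (hγ : IsCurve S x y γ) {a b : ℝ} (ha : a ∈ Icc (0 : ℝ) 1)
    (hb : b ∈ Icc (0 : ℝ) 1) (hab : a ≤ b) :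
    IsCurve S (γ a) (γ b) (γ ∘ AffineMap.lineMap (k := ℝ) a b) := by
  have hsub : Icc a b ⊆ Icc 0 1 := Icc_subset_Icc ha.1 hb.2
  have hmaps : MapsTo (AffineMap.lineMap (k := ℝ) a b) (Icc (0 : ℝ) 1) (Icc a b) := by
    rw [← segment_eq_Icc hab]; exact fun t ht => lineMap_mem_segment (𝕜 := ℝ) a b ht
  refine ⟨(hγ.1.mono hsub).comp AffineMap.lineMap_continuous.continuousOn hmaps,
    fun t ht => hγ.2.1 (hsub (hmaps ht)), by simp, by simp, ?_⟩
  rw [eVariationOn_comp_lineMap γ hab]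
  exact ne_top_of_le_ne_top hγ.2.2.2.2 (eVariationOn.mono γ hsub)

end Curves

section Isometric

variable {M : Type*} [MetricSpace M] {n : ℕ} {S : Set M} {f : M → EuclideanSpace ℝ (Fin n)}
  {x y : M} {γ : ℝ → M}

lemma edist_le_eVariationOn_comp_of_forall_memF
    (H : ∀ ε : ℝ, 0 < ε → ∀ x ∈ S, ∀ y ∈ S, x ≠ y → MemF n ε S x y f)
    (hγ : IsCurve S x y γ) {a b : ℝ} (ha : a ∈ Icc (0 : ℝ) 1) (hb : b ∈ Icc (0 : ℝ) 1)
    (hab : a ≤ b) :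
    edist (γ a) (γ b) ≤ eVariationOn (f ∘ γ) (Icc a b) := by
  by_cases hγab : γ a = γ b
  · simp [hγab]
  have hc := hγ.comp_lineMap ha hb hab
  calc edist (γ a) (γ b) ≤ dS S (γ a) (γ b) := edist_le_dS
    _ ≤ eVariationOn (f ∘ γ ∘ AffineMap.lineMap (k := ℝ) a b) (Icc 0 1) :=
        ENNReal.le_of_forall_pos_ofReal_one_sub_mul_lt hc.2.2.2.2 fun ε hε =>
          H ε hε _ (hγ.2.1 ha) _ (hγ.2.1 hb) hγab _ hc
    _ = eVariationOn (f ∘ γ) (Icc a b) := eVariationOn_comp_lineMap (f ∘ γ) hab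

lemma eVariationOn_comp_eq_of_forall_memF (hf : LipschitzWith 1 f)
    (H : ∀ ε : ℝ, 0 < ε → ∀ x ∈ S, ∀ y ∈ S, x ≠ y → MemF n ε S x y f)
    (hγ : IsCurve S x y γ) :
    eVariationOn (f ∘ γ) (Icc 0 1) = eVariationOn γ (Icc 0 1) := by
  refine le_antisymm ?_ (eVariationOn_le_of_edist_le fun a ha b hb hab => ?_)
  · simpa using hf.lipschitzOnWith.comp_eVariationOn_le (mapsTo_univ γ _)
  · rw [inter_eq_self_of_subset_right (Icc_subset_Icc ha.1 hb.2)]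
    exact edist_le_eVariationOn_comp_of_forall_memF H hγ ha hb hab

lemma memF_of_forall_eVariationOn_comp_eq
    (H : ∀ γ : ℝ → M, IsCurve S x y γ →
      eVariationOn (f ∘ γ) (Icc 0 1) = eVariationOn γ (Icc 0 1))
    (hxy : x ≠ y) {ε : ℝ} (hε : 0 < ε) : MemF n ε S x y f := by
  intro γ hγ
  have hdS := dS_le_eVariationOn hγ
  have hV₀ : eVariationOn γ (Icc 0 1) ≠ 0 :=
    ((edist_pos.2 hxy).trans_le (edist_le_dS.trans hdS)).ne'
  rw [H γ hγ]
  calc ENNReal.ofReal (1 - ε) * dS S x y ≤ 1 * eVariationOn γ (Icc 0 1) :=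
        mul_le_mul' (ENNReal.ofReal_le_one.2 (by linarith)) hdS
    _ < (1 + ENNReal.ofReal ε) * eVariationOn γ (Icc 0 1) :=
        ENNReal.mul_lt_mul_left hV₀ hγ.2.2.2.2
          (ENNReal.lt_add_right ENNReal.one_ne_top (ENNReal.ofReal_pos.2 hε).ne')
    _ = eVariationOn γ (Icc 0 1) + ENNReal.ofReal ε * eVariationOn γ (Icc 0 1) := by
        rw [add_mul, one_mul]

end Isometric

theorem stmt10_general {M : Type*} [MetricSpace M] (n : ℕ) (S : Set M)
    (f : M → EuclideanSpace ℝ (Fin n)) (hf : LipschitzWith 1 f) :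
    (∀ ε : ℝ, 0 < ε → ∀ x ∈ S, ∀ y ∈ S, x ≠ y → MemF n ε S x y f) ↔
    (∀ (x y : M) (γ : ℝ → M), IsCurve S x y γ →
      eVariationOn (f ∘ γ) (Set.Icc 0 1) = eVariationOn γ (Set.Icc 0 1)) :=
  ⟨fun H _ _ _ hγ => eVariationOn_comp_eq_of_forall_memF hf H hγ,
    fun H _ hε x _ y _ hxy => memF_of_forall_eVariationOn_comp_eq (H x y) hxy hε⟩

theorem stmt10 {M : Type*} [MetricSpace M] (n : ℕ) (S : Set M)
    (hS : IsPathConnected S)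
    (f : M → EuclideanSpace ℝ (Fin n)) (hf : LipschitzWith 1 f) :
    (∀ ε : ℝ, 0 < ε → ∀ x ∈ S, ∀ y ∈ S, x ≠ y → MemF n ε S x y f) ↔
    (∀ (x y : M) (γ : ℝ → M), IsCurve S x y γ →
      eVariationOn (f ∘ γ) (Set.Icc 0 1) = eVariationOn γ (Set.Icc 0 1)) :=
  stmt10_general n S f hf
end

section
/- Let M be a Riemannian manifold with continuous metric and S ⊂ M compact and path-connected. For every x, y ∈ S and ε > 0, the set F_ε(x,y,S) is open in the space Lip₁(M,ℝⁿ) of 1-Lipschitz maps with the metric of uniform convergence D(f,g) = min{1, sup_M |f-g|}. -/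
/-!
The complement of `F_ε(x,y,S)` is sequentially closed. Let `f_k → f` uniformly and let `γ_k` be
curves with `ℓ(f_k ∘ γ_k) + ε ℓ(γ_k) ≤ (1-ε) d_S(x,y)`. Their lengths are bounded, so after
reparametrizing proportionally to arc length the `γ_k` are equi-Lipschitz maps `[0,1] → S`.
By Tychonoff they have a pointwise cluster point `γ` along an ultrafilter; it is again a Lipschitz
curve in `S` from `x` to `y`, and `f_k ∘ γ_k → f ∘ γ` pointwise along the same ultrafilter. Length
is lower semicontinuous under pointwise convergence, so `ℓ(f ∘ γ) + ε ℓ(γ) ≤ (1-ε) d_S(x,y)`.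
-/

open scoped ENNReal

open Set Filter Topology
open scoped NNReal

section Variation

variable {α E : Type*} [LinearOrder α] [PseudoEMetricSpace E]

theorem variationOnFromTo_eq_sub (f : α → E) (s : Set α) (a b : α) :
    variationOnFromTo f s a b =
      (eVariationOn f (s ∩ Icc a b)).toReal - (eVariationOn f (s ∩ Icc b a)).toReal := by
  rcases le_total a b with hab | hba
  · rw [variationOnFromTo.eq_of_le f s hab, eVariationOn.subsingleton f (s := s ∩ Icc b a)
      (fun z hz w hw => by grind), ENNReal.toReal_zero, sub_zero]
  · rw [variationOnFromTo.eq_of_ge f s hba, eVariationOn.subsingleton f (s := s ∩ Icc a b)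
      (fun z hz w hw => by grind), ENNReal.toReal_zero, zero_sub]

theorem continuousOn_variationOnFromTo [TopologicalSpace α] [OrderTopology α] {f : α → E}
    {s : Set α} (hc : ContinuousOn f s) (hf : BoundedVariationOn f s) {a : α} (ha : a ∈ s) :
    ContinuousOn (variationOnFromTo f s a) s := by
  intro x hx
  -- `ψ y = ψ x + var f [x, y] - var f [y, x]`, and both variations tend to `0` at `x`.
  have hright := hf.tendsto_eVariationOn_Icc_zero_right x ((hc x hx).mono inter_subset_left)
  have hleft := hf.tendsto_eVariationOn_Icc_zero_left ((hc x hx).mono inter_subset_left)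
  have htoReal := ENNReal.tendsto_toReal ENNReal.zero_ne_top
  have key := ((htoReal.comp hright).sub (htoReal.comp hleft)).const_add
    (variationOnFromTo f s a x)
  rw [ENNReal.toReal_zero, sub_zero, add_zero] at key
  refine key.congr' ?_
  filter_upwards [self_mem_nhdsWithin] with y hy
  rw [Function.comp_apply, Function.comp_apply, ← variationOnFromTo_eq_sub,
    variationOnFromTo.add hf.locallyBoundedVariationOn ha hx hy]

end Variation

theorem HasConstantSpeedOnWith.lipschitzOnWith {E : Type*} [PseudoEMetricSpace E] {f : ℝ → E}
    {s : Set ℝ} {l : ℝ≥0} (h : HasConstantSpeedOnWith f s l) : LipschitzOnWith l f s := by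
  have key : ∀ a ∈ s, ∀ b ∈ s, a ≤ b → edist (f a) (f b) ≤ l * edist a b := by
    intro a ha b hb hab
    calc edist (f a) (f b) ≤ eVariationOn f (s ∩ Icc a b) :=
          eVariationOn.edist_le f ⟨ha, le_rfl, hab⟩ ⟨hb, hab, le_rfl⟩
      _ = l * edist a b := by
          rw [h ha hb, edist_dist, Real.dist_eq, abs_sub_comm, abs_of_nonneg (sub_nonneg.2 hab),
            ENNReal.ofReal_mul l.coe_nonneg, ENNReal.ofReal_coe_nnreal]
  intro a ha b hb
  rcases le_total a b with hab | hba
  · exact key a ha b hb hab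
  · rw [edist_comm, edist_comm a]
    exact key b hb a ha hba

theorem BoundedVariationOn.exists_lipschitz_reparam {E : Type*} [EMetricSpace E] {γ : ℝ → E}
    (hc : ContinuousOn γ (Icc 0 1)) (hb : BoundedVariationOn γ (Icc 0 1)) :
    ∃ (η : ℝ → E) (φ : ℝ → ℝ),
      LipschitzOnWith (eVariationOn γ (Icc 0 1)).toNNReal η (Icc 0 1) ∧
      MonotoneOn φ (Icc 0 1) ∧ φ '' Icc 0 1 = Icc 0 1 ∧ EqOn γ (η ∘ φ) (Icc 0 1) := by
  set I : Set ℝ := Icc 0 1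
  set L := (eVariationOn γ I).toNNReal
  have h0 : (0 : ℝ) ∈ I := left_mem_Icc.2 zero_le_one
  have h1 : (1 : ℝ) ∈ I := right_mem_Icc.2 zero_le_one
  rcases eq_zero_or_pos L with hL | hL
  · have hvar : eVariationOn γ I = 0 := (ENNReal.toNNReal_eq_zero_iff _).1 hL |>.resolve_right hb
    refine ⟨γ, id, fun a ha b hb => ?_, monotoneOn_id, image_id _, fun _ _ => rfl⟩
    rw [(eVariationOn.eq_zero_iff γ).1 hvar a ha b hb]
    exact bot_le
  set ψ := variationOnFromTo γ I 0
  have hψ0 : ψ 0 = 0 := variationOnFromTo.self γ I 0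
  have hψ1 : ψ 1 = L := by
    show variationOnFromTo γ I 0 1 = L
    rw [variationOnFromTo.eq_of_le γ I zero_le_one, inter_self, ENNReal.coe_toNNReal_eq_toReal]
  have hψmono : MonotoneOn ψ I := variationOnFromTo.monotoneOn hb.locallyBoundedVariationOn h0
  have hψI : ψ '' I = Icc 0 (L : ℝ) := by
    refine Subset.antisymm ?_ ?_
    · rintro _ ⟨t, ht, rfl⟩
      exact ⟨hψ0 ▸ hψmono h0 ht ht.1, hψ1 ▸ hψmono ht h1 ht.2⟩
    · simpa [hψ0, hψ1] using
        intermediate_value_Icc (f := ψ) zero_le_one (continuousOn_variationOnFromTo hc hb h0)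
  set p := naturalParameterization γ I 0
  have hp : LipschitzOnWith 1 p (Icc 0 (L : ℝ)) :=
    hψI ▸ (has_unit_speed_naturalParameterization γ hb.locallyBoundedVariationOn h0).lipschitzOnWith
  have hscale : LipschitzWith L fun u : ℝ => L * u :=
    LipschitzWith.of_dist_le_mul fun a b => by
      rw [Real.dist_eq, Real.dist_eq, ← mul_sub, abs_mul, NNReal.abs_eq]
  have hscaleI : MapsTo (fun u : ℝ => L * u) I (Icc 0 (L : ℝ)) := fun u hu =>
    ⟨mul_nonneg L.coe_nonneg hu.1, mul_le_of_le_one_right L.coe_nonneg hu.2⟩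
  have hL0 : (L : ℝ) ≠ 0 := NNReal.coe_ne_zero.2 hL.ne'
  have hLinv : 0 < (L : ℝ)⁻¹ := inv_pos.2 hL
  refine ⟨fun u => p (L * u), fun t => (L : ℝ)⁻¹ * ψ t, ?_, ?_, ?_, ?_⟩
  · have := hp.comp hscale.lipschitzOnWith hscaleI
    rwa [one_mul] at this
  · exact fun a ha b hb hab => mul_le_mul_of_nonneg_left (hψmono ha hb hab) hLinv.le
  · rw [show (fun t => (L : ℝ)⁻¹ * ψ t) = ((L : ℝ)⁻¹ * ·) ∘ ψ from rfl, image_comp, hψI,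
      image_mul_left_Icc' hLinv, mul_zero, inv_mul_cancel₀ hL0]
  · intro t ht
    rw [Function.comp_apply, mul_inv_cancel_left₀ hL0]
    exact (edist_eq_zero.1
      (edist_naturalParameterization_eq_zero hb.locallyBoundedVariationOn h0 ht)).symm

theorem eVariationOn_le_of_tendsto {α E ι : Type*} [LinearOrder α] [PseudoEMetricSpace E]
    {F : ι → α → E} {f : α → E} {s : Set α} {l : Filter ι} [l.NeBot]
    (hF : ∀ t ∈ s, Tendsto (fun i => F i t) l (𝓝 (f t))) {v : ℝ≥0∞}
    (hv : Tendsto (fun i => eVariationOn (F i) s) l (𝓝 v)) :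
    eVariationOn f s ≤ v :=
  le_of_forall_lt_imp_le_of_dense fun _ hw =>
    ge_of_tendsto hv <| (eVariationOn.lowerSemicontinuous_aux hF hw).mono fun _ => le_of_lt

section Curves

variable {M : Type*} [MetricSpace M] {S : Set M} {x y : M}

theorem LipschitzOnWith.isCurve {γ : ℝ → M} {C : ℝ≥0} (hγ : LipschitzOnWith C γ (Icc 0 1))
    (hS : MapsTo γ (Icc 0 1) S) (h0 : γ 0 = x) (h1 : γ 1 = y) : IsCurve S x y γ :=
  ⟨hγ.continuousOn, hS, h0, h1,
    hγ.comp_boundedVariationOn (mapsTo_id _) (BoundedVariationOn.id_Icc 0 1)⟩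

theorem IsCurve.dS_le {γ : ℝ → M} (hγ : IsCurve S x y γ) :
    dS S x y ≤ eVariationOn γ (Icc 0 1) :=
  iInf₂_le γ hγ

theorem IsCurve.exists_lipschitzOnWith {E : Type*} [PseudoEMetricSpace E] {γ : ℝ → M}
    (hγ : IsCurve S x y γ) (f : M → E) :
    ∃ η : ℝ → M, IsCurve S x y η ∧
      LipschitzOnWith (eVariationOn γ (Icc 0 1)).toNNReal η (Icc 0 1) ∧
      eVariationOn (f ∘ η) (Icc 0 1) = eVariationOn (f ∘ γ) (Icc 0 1) ∧
      eVariationOn η (Icc 0 1) = eVariationOn γ (Icc 0 1) := by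
  obtain ⟨hc, hS, h0, h1, hb⟩ := hγ
  obtain ⟨η, φ, hη, hφ, hφI, hγη⟩ := BoundedVariationOn.exists_lipschitz_reparam hc hb
  have hφ0 : φ 0 = 0 :=
    (hφ.map_isLeast (isLeast_Icc zero_le_one)).unique (hφI.symm ▸ isLeast_Icc zero_le_one)
  have hφ1 : φ 1 = 1 :=
    (hφ.map_isGreatest (isGreatest_Icc zero_le_one)).unique (hφI.symm ▸ isGreatest_Icc zero_le_one)
  have hηS : MapsTo η (Icc 0 1) S := by
    rw [← hφI]
    rintro _ ⟨t, ht, rfl⟩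
    simpa only [hγη ht, Function.comp_apply] using hS ht
  have hη0 : η 0 = x := by
    rw [← h0, hγη (left_mem_Icc.2 zero_le_one), Function.comp_apply, hφ0]
  have hη1 : η 1 = y := by
    rw [← h1, hγη (right_mem_Icc.2 zero_le_one), Function.comp_apply, hφ1]
  refine ⟨η, hη.isCurve hηS hη0 hη1, hη, ?_, ?_⟩
  · rw [eVariationOn.eq_of_eqOn (hγη.comp_left (g := f)),
      ← Function.comp_assoc, eVariationOn.comp_eq_of_monotoneOn _ φ hφ, hφI]
  · rw [eVariationOn.eq_of_eqOn hγη, eVariationOn.comp_eq_of_monotoneOn _ φ hφ, hφI]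


variable {E ι : Type*} [PseudoEMetricSpace E] {l : Filter ι} [l.NeBot] {f : M → E} {F : ι → M → E}

theorem exists_isCurve_le_of_lipschitzOnWith (hS : IsCompact S) (hf : ContinuousOn f S)
    (hF : TendstoUniformlyOn F f l S) {γ : ι → ℝ → M} (hγ : ∀ i, IsCurve S x y (γ i)) {C : ℝ≥0}
    (hlip : ∀ i, LipschitzOnWith C (γ i) (Icc 0 1)) {e c : ℝ≥0∞} (he : e ≠ ⊤)
    (hle : ∀ i, eVariationOn (F i ∘ γ i) (Icc 0 1) + e * eVariationOn (γ i) (Icc 0 1) ≤ c) :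
    ∃ γ' : ℝ → M, IsCurve S x y γ' ∧
      eVariationOn (f ∘ γ') (Icc 0 1) + e * eVariationOn γ' (Icc 0 1) ≤ c := by
  set I : Set ℝ := Icc 0 1
  have hK : IsCompact {h : I → M | LipschitzWith C h ∧ ∀ t, h t ∈ S} :=
    (isCompact_pi_infinite fun _ => hS).inter_left (isClosed_setOfPred_lipschitzWith C)
  obtain ⟨h, ⟨hh, hhS⟩, hcluster⟩ := hK.exists_mapClusterPt (f := l)
    (u := fun i => I.domRestrict (γ i))
    (tendsto_principal.2 (.of_forall fun i => ⟨(hlip i).to_restrict, fun t => (hγ i).2.1 t.2⟩))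
  obtain ⟨U, hUl, hU⟩ := mapClusterPt_iff_ultrafilter.1 hcluster
  set γ' := IccExtend zero_le_one h
  have hγ'I : ∀ t (ht : t ∈ I), γ' t = h ⟨t, ht⟩ := fun t ht => IccExtend_of_mem _ _ ht
  have hpt : ∀ t ∈ I, Tendsto (fun i => γ i t) U (𝓝 (γ' t)) := fun t ht =>
    hγ'I t ht ▸ tendsto_pi_nhds.1 hU ⟨t, ht⟩
  have hconst : ∀ t ∈ I, ∀ z, (∀ i, γ i t = z) → γ' t = z := fun t ht z hz =>
    tendsto_nhds_unique (hpt t ht) (by simpa only [hz] using tendsto_const_nhds)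
  have hγ' : IsCurve S x y γ' := by
    refine LipschitzOnWith.isCurve (C := C) (fun a ha b hb => ?_) (fun t ht => ?_)
      (hconst 0 (left_mem_Icc.2 zero_le_one) x fun i => (hγ i).2.2.1)
      (hconst 1 (right_mem_Icc.2 zero_le_one) y fun i => (hγ i).2.2.2.1)
    · rw [hγ'I a ha, hγ'I b hb]
      exact hh _ _
    · rw [hγ'I t ht]
      exact hhS _
  have hFU : TendstoUniformlyOn F f U S := fun u hu => hUl (hF u hu)
  have hFpt : ∀ t ∈ I, Tendsto (fun i => F i (γ i t)) U (𝓝 (f (γ' t))) := fun t ht =>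
    hFU.tendsto_comp (hf _ (hγ'.2.1 ht))
      (tendsto_nhdsWithin_iff.2 ⟨hpt t ht, .of_forall fun i => (hγ i).2.1 ht⟩)
  obtain ⟨v, hvar⟩ : ∃ v, Tendsto (fun i => eVariationOn (F i ∘ γ i) I) U (𝓝 v) :=
    ⟨_, (U.map fun i => eVariationOn (F i ∘ γ i) I).le_nhds_lim⟩
  obtain ⟨w, hlen⟩ : ∃ w, Tendsto (fun i => eVariationOn (γ i) I) U (𝓝 w) :=
    ⟨_, (U.map fun i => eVariationOn (γ i) I).le_nhds_lim⟩
  refine ⟨γ', hγ', ?_⟩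
  calc eVariationOn (f ∘ γ') I + e * eVariationOn γ' I ≤ v + e * w := by
        gcongr
        exacts [eVariationOn_le_of_tendsto hFpt hvar, eVariationOn_le_of_tendsto hpt hlen]
    _ ≤ c := le_of_tendsto' (hvar.add (ENNReal.Tendsto.const_mul hlen (.inr he))) hle

theorem exists_isCurve_le_of_tendstoUniformlyOn (hS : IsCompact S) (hf : ContinuousOn f S)
    (hF : TendstoUniformlyOn F f l S) {γ : ι → ℝ → M} (hγ : ∀ i, IsCurve S x y (γ i))
    {e c : ℝ≥0∞} (he0 : e ≠ 0) (he : e ≠ ⊤) (hc : c ≠ ⊤)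
    (hle : ∀ i, eVariationOn (F i ∘ γ i) (Icc 0 1) + e * eVariationOn (γ i) (Icc 0 1) ≤ c) :
    ∃ γ' : ℝ → M, IsCurve S x y γ' ∧
      eVariationOn (f ∘ γ') (Icc 0 1) + e * eVariationOn γ' (Icc 0 1) ≤ c := by
  choose η hη hlip hFη hηγ using fun i => (hγ i).exists_lipschitzOnWith (F i)
  have hlen : ∀ i, (eVariationOn (γ i) (Icc 0 1)).toNNReal ≤ (c / e).toNNReal := fun i =>
    ENNReal.toNNReal_mono (ENNReal.div_ne_top hc he0) <|
      (ENNReal.le_div_iff_mul_le (.inl he0) (.inl he)).2 <| mul_comm e _ ▸ le_add_self.trans (hle i)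
  exact exists_isCurve_le_of_lipschitzOnWith hS hf hF hη (fun i => (hlip i).weaken (hlen i)) he
    fun i => by rw [hFη, hηγ]; exact hle i

end Curves

theorem stmt12_general {M : Type*} [MetricSpace M] (n : ℕ) (S : Set M)
    (hScpt : IsCompact S)
    (x y : M) (ε : ℝ) (hε : 0 < ε) :
    IsOpen {F : {F : UniformFun M (EuclideanSpace ℝ (Fin n)) //
        LipschitzWith 1 (UniformFun.toFun F)} |
      MemF n ε S x y (UniformFun.toFun F.val)} := by
  rw [← isClosed_compl_iff]
  refine IsSeqClosed.isClosed fun {G F} hG hGF => ?_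
  simp only [mem_compl_iff, mem_ofPred_eq, MemF, not_forall, not_lt, exists_prop] at hG ⊢
  choose γ hγ hle using hG
  have hunif : TendstoUniformly (fun k => UniformFun.toFun (G k).val) (UniformFun.toFun F.val)
      atTop :=
    UniformFun.tendsto_iff_tendstoUniformly.1 ((continuous_subtype_val.tendsto F).comp hGF)
  have hdS : dS S x y ≠ ⊤ := ((hγ 0).dS_le.trans_lt (hγ 0).2.2.2.2.lt_top).ne
  exact exists_isCurve_le_of_tendstoUniformlyOn hScpt F.2.continuous.continuousOn
    hunif.tendstoUniformlyOn hγ (ENNReal.ofReal_pos.2 hε).ne' ENNReal.ofReal_ne_top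
    (ENNReal.mul_ne_top ENNReal.ofReal_ne_top hdS) hle

theorem stmt12 {M : Type*} [MetricSpace M] (n : ℕ) (S : Set M)
    (hScpt : IsCompact S) (hSpc : IsPathConnected S)
    (x y : M) (hx : x ∈ S) (hy : y ∈ S) (ε : ℝ) (hε : 0 < ε) :
    IsOpen {F : {F : UniformFun M (EuclideanSpace ℝ (Fin n)) //
        LipschitzWith 1 (UniformFun.toFun F)} |
      MemF n ε S x y (UniformFun.toFun F.val)} :=
  stmt12_general n S hScpt x y ε hε
end

section
/- Fix p₀ ∈ M, f : M → ℝⁿ 1-Lipschitz with f(p₀) = 0, and ε > 0. Define h(p) = f(p)(1 - ε/(1 + d(p))) where d(p) = d_M(p,p₀). Then for all p, q ∈ M: |h(p) - h(q)| ≤ d_M(p,q) · (1 - ε/((1+d(p))(1+d(q)))). In particular sup_M |h - f| ≤ ε and h is strictly short on every bounded subset of M. -/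
theorem stmt15 {M : Type*} [MetricSpace M] (n : ℕ) (p₀ : M)
    (f : M → EuclideanSpace ℝ (Fin n)) (hf : LipschitzWith 1 f) (hf0 : f p₀ = 0)
    (ε : ℝ) (hε0 : 0 < ε) (hε1 : ε ≤ 1)
    (h : M → EuclideanSpace ℝ (Fin n))
    (hdef : ∀ p, h p = (1 - ε / (1 + dist p p₀)) • f p) :
    (∀ p q, ‖h p - h q‖ ≤ dist p q * (1 - ε / ((1 + dist p p₀) * (1 + dist q p₀)))) ∧
    (∀ p, ‖h p - f p‖ ≤ ε) ∧
    (∀ A : Set M, Bornology.IsBounded A → ∃ L : ℝ, L < 1 ∧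
      ∀ p ∈ A, ∀ q ∈ A, ‖h p - h q‖ ≤ L * dist p q) := by
  have hfq : ∀ q : M, ‖f q‖ ≤ dist q p₀ := by
    intro q
    have := hf.dist_le_mul q p₀
    simpa [hf0, dist_eq_norm] using this
  have key : ∀ p q : M, ‖h p - h q‖ ≤
      dist p q * (1 - ε / ((1 + dist p p₀) * (1 + dist q p₀))) := by
    intro p q
    set a := 1 + dist p p₀ with ha
    set b := 1 + dist q p₀ with hb
    have ha1 : (1:ℝ) ≤ a := by simp [ha, dist_nonneg]
    have hb1 : (1:ℝ) ≤ b := by simp [hb, dist_nonneg]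
    have ha0 : (0:ℝ) < a := lt_of_lt_of_le one_pos ha1
    have hb0 : (0:ℝ) < b := lt_of_lt_of_le one_pos hb1
    have hsplit : h p - h q = (1 - ε / a) • (f p - f q) + ((1 - ε / a) - (1 - ε / b)) • f q := by
      rw [hdef p, hdef q]; module
    have hcnn : 0 ≤ 1 - ε / a := by
      have : ε / a ≤ 1 := by rw [div_le_one ha0]; exact hε1.trans ha1
      linarith
    have h1 : ‖(1 - ε / a) • (f p - f q)‖ ≤ (1 - ε / a) * dist p q := by
      rw [norm_smul, Real.norm_eq_abs, abs_of_nonneg hcnn, ← dist_eq_norm]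
      have h0 : dist (f p) (f q) ≤ dist p q := by simpa using hf.dist_le_mul p q
      exact mul_le_mul_of_nonneg_left h0 hcnn
    have habs : |a - b| ≤ dist p q := by
      have := abs_dist_sub_le p q p₀
      simpa [ha, hb] using this
    have hfqb : ‖f q‖ ≤ b - 1 := by
      have := hfq q; rw [hb]; linarith
    have h2 : ‖((1 - ε / a) - (1 - ε / b)) • f q‖ ≤ ε * dist p q / (a * b) * (b - 1) := by
      rw [norm_smul, Real.norm_eq_abs]
      have hc : (1 - ε / a) - (1 - ε / b) = ε * (a - b) / (a * b) := by
        field_simp; ring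
      rw [hc, abs_div, abs_mul, abs_of_pos hε0, abs_of_pos (mul_pos ha0 hb0)]
      gcongr <;> first | positivity | exact norm_nonneg _ | exact habs | exact hfqb | linarith
    have hnorm : ‖h p - h q‖ ≤ (1 - ε / a) * dist p q + ε * dist p q / (a * b) * (b - 1) := by
      rw [hsplit]
      exact (norm_add_le _ _).trans (add_le_add h1 h2)
    have heq : (1 - ε / a) * dist p q + ε * dist p q / (a * b) * (b - 1)
        = dist p q * (1 - ε / (a * b)) := by
      field_simp; ring
    linarith [hnorm, heq ▸ hnorm]
  refine ⟨key, ?_, ?_⟩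
  · intro p
    rw [hdef p]
    have : (1 - ε / (1 + dist p p₀)) • f p - f p = (-(ε / (1 + dist p p₀))) • f p := by
      module
    rw [this, norm_smul, Real.norm_eq_abs]
    have hd : (0:ℝ) < 1 + dist p p₀ := by positivity
    rw [abs_neg, abs_of_pos (div_pos hε0 hd)]
    have h1 : ε / (1 + dist p p₀) * ‖f p‖ ≤ ε / (1 + dist p p₀) * dist p p₀ :=
      mul_le_mul_of_nonneg_left (hfq p) (le_of_lt (div_pos hε0 hd))
    have h2 : ε / (1 + dist p p₀) * dist p p₀ ≤ ε := by
      rw [div_mul_eq_mul_div, div_le_iff₀ hd]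
      nlinarith [dist_nonneg (x := p) (y := p₀)]
    linarith
  · intro A hA
    obtain ⟨r, hr⟩ := hA.subset_closedBall p₀
    set R := max r 0 with hR
    refine ⟨1 - ε / ((1 + R) * (1 + R)), ?_, ?_⟩
    · have hR0 : (0:ℝ) ≤ R := le_max_right r 0
      have : 0 < ε / ((1 + R) * (1 + R)) := by positivity
      linarith
    · intro p hp q hq
      have hpR : dist p p₀ ≤ R := (hr hp).trans (le_max_left r 0)
      have hqR : dist q p₀ ≤ R := (hr hq).trans (le_max_left r 0)
      have hR0 : (0:ℝ) ≤ R := le_max_right r 0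
      refine (key p q).trans ?_
      rw [mul_comm (1 - ε / ((1 + R) * (1 + R)))]
      gcongr <;> first
        | exact dist_nonneg
        | positivity
        | nlinarith [dist_nonneg (x := p) (y := p₀), dist_nonneg (x := q) (y := p₀)]
end

section
/- Let F : ℝⁿ → ℝⁿ be 1-Lipschitz and define F'(x) := F(x(1 - τ/(1+|x|))) for τ ∈ (0,1). Then for all x, y ∈ ℝⁿ: |F'(x) - F'(y)| ≤ |x-y|(1 - τ/((1+|x|)(1+|y|))); in particular F' is locally strictly short and sup_x |F(x) - F'(x)| ≤ τ. -/
/-!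
Write `x' = (1 - τ/(1+‖x‖)) • x`. Expanding `‖x' - y'‖²` through `⟪x, y⟫`, both it and
`‖x - y‖² (1 - τ/((1+‖x‖)(1+‖y‖)))²` are affine in `⟪x, y⟫` and coincide when `⟪x, y⟫ = ‖x‖‖y‖`
(on a ray the shrinking map is `r ↦ r - τ r/(1+r)`, whose slope between `r` and `s` is exactly
`1 - τ/((1+r)(1+s))`). The slopes in `⟪x, y⟫` are ordered so that Cauchy–Schwarz gives the
inequality. Composing with the 1-Lipschitz `F` keeps it; on a set of norm `≤ R` the factor is at
most `1 - τ/(1+R)²`, and `x` moves by `τ‖x‖/(1+‖x‖) ≤ τ`.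
-/

open Bornology

noncomputable section

variable {E : Type*}

def radialShrink [SeminormedAddCommGroup E] [NormedSpace ℝ E] (τ : ℝ) (x : E) : E :=
  (1 - τ / (1 + ‖x‖)) • x

lemma radialShrink_sq_ineq {X Y p τ : ℝ} (hX : 0 ≤ X) (hY : 0 ≤ Y) (hp : p ≤ X * Y)
    (hτ0 : 0 ≤ τ) (hτ1 : τ ≤ 1) :
    (1 - τ / (1 + X)) ^ 2 * X ^ 2 - 2 * ((1 - τ / (1 + X)) * (1 - τ / (1 + Y))) * p
        + (1 - τ / (1 + Y)) ^ 2 * Y ^ 2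
      ≤ (1 - τ / ((1 + X) * (1 + Y))) ^ 2 * (X ^ 2 - 2 * p + Y ^ 2) := by
  have hX1 : (0 : ℝ) < 1 + X := by linarith
  have hY1 : (0 : ℝ) < 1 + Y := by linarith
  have hgap : (1 - τ / ((1 + X) * (1 + Y))) ^ 2 * (X ^ 2 - 2 * p + Y ^ 2) -
      ((1 - τ / (1 + X)) ^ 2 * X ^ 2 - 2 * ((1 - τ / (1 + X)) * (1 - τ / (1 + Y))) * p
        + (1 - τ / (1 + Y)) ^ 2 * Y ^ 2)
      = 2 * τ * (X * Y - p) * (((1 + X) * (1 + Y) - τ) * (X + Y) - τ * (X * Y))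
        / ((1 + X) ^ 2 * (1 + Y) ^ 2) := by
    field_simp
    ring
  have hfactor : 0 ≤ ((1 + X) * (1 + Y) - τ) * (X + Y) - τ * (X * Y) := by
    nlinarith [sq_nonneg (X + Y), mul_nonneg hX hY]
  have hgap_nonneg : 0 ≤ 2 * τ * (X * Y - p) * (((1 + X) * (1 + Y) - τ) * (X + Y) - τ * (X * Y))
      / ((1 + X) ^ 2 * (1 + Y) ^ 2) := by
    have : 0 ≤ X * Y - p := by linarith
    positivity
  linarith

lemma norm_radialShrink_sub_radialShrink_le [NormedAddCommGroup E] [InnerProductSpace ℝ E]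
    {τ : ℝ} (hτ0 : 0 ≤ τ) (hτ1 : τ ≤ 1) (x y : E) :
    ‖radialShrink τ x - radialShrink τ y‖
      ≤ ‖x - y‖ * (1 - τ / ((1 + ‖x‖) * (1 + ‖y‖))) := by
  have hX1 : (0 : ℝ) < 1 + ‖x‖ := by positivity
  have hY1 : (0 : ℝ) < 1 + ‖y‖ := by positivity
  have hα : 0 ≤ 1 - τ / (1 + ‖x‖) := by
    rw [sub_nonneg, div_le_one hX1]; linarith [norm_nonneg x]
  have hβ : 0 ≤ 1 - τ / (1 + ‖y‖) := by
    rw [sub_nonneg, div_le_one hY1]; linarith [norm_nonneg y]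
  have hfactor : 0 ≤ 1 - τ / ((1 + ‖x‖) * (1 + ‖y‖)) := by
    rw [sub_nonneg, div_le_one (by positivity)]; nlinarith [norm_nonneg x, norm_nonneg y]
  have hexpand : ‖radialShrink τ x - radialShrink τ y‖ ^ 2
      = (1 - τ / (1 + ‖x‖)) ^ 2 * ‖x‖ ^ 2
        - 2 * ((1 - τ / (1 + ‖x‖)) * (1 - τ / (1 + ‖y‖))) * inner ℝ x y
        + (1 - τ / (1 + ‖y‖)) ^ 2 * ‖y‖ ^ 2 := by
    rw [radialShrink, radialShrink, norm_sub_sq_real, norm_smul, norm_smul,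
      real_inner_smul_left, real_inner_smul_right, Real.norm_of_nonneg hα,
      Real.norm_of_nonneg hβ]
    ring
  have hsq : ‖radialShrink τ x - radialShrink τ y‖ ^ 2
      ≤ (‖x - y‖ * (1 - τ / ((1 + ‖x‖) * (1 + ‖y‖)))) ^ 2 := by
    rw [hexpand, mul_pow, mul_comm (‖x - y‖ ^ 2), norm_sub_sq_real]
    exact radialShrink_sq_ineq (norm_nonneg x) (norm_nonneg y) (real_inner_le_norm x y) hτ0 hτ1
  exact (pow_le_pow_iff_left₀ (norm_nonneg _) (by positivity) two_ne_zero).mp hsq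

lemma norm_sub_radialShrink_le [SeminormedAddCommGroup E] [NormedSpace ℝ E] {τ : ℝ}
    (hτ : 0 ≤ τ) (x : E) : ‖x - radialShrink τ x‖ ≤ τ := by
  have hX1 : (0 : ℝ) < 1 + ‖x‖ := by positivity
  have hsub : x - radialShrink τ x = (τ / (1 + ‖x‖)) • x := by
    rw [radialShrink, sub_smul, one_smul, sub_sub_cancel]
  rw [hsub, norm_smul, Real.norm_of_nonneg (by positivity), div_mul_eq_mul_div,
    div_le_iff₀ hX1]
  nlinarith [norm_nonneg x]

lemma exists_lt_one_norm_sub_le_of_isBounded {F : Type*} [SeminormedAddCommGroup E]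
    [SeminormedAddCommGroup F] {G : E → F} {τ : ℝ} (hτ : 0 < τ)
    (hG : ∀ x y, ‖G x - G y‖ ≤ ‖x - y‖ * (1 - τ / ((1 + ‖x‖) * (1 + ‖y‖))))
    {A : Set E} (hA : IsBounded A) :
    ∃ L : ℝ, L < 1 ∧ ∀ x ∈ A, ∀ y ∈ A, ‖G x - G y‖ ≤ L * ‖x - y‖ := by
  obtain ⟨R, hR₀, hR⟩ : ∃ R, 0 ≤ R ∧ ∀ x ∈ A, ‖x‖ ≤ R := by
    obtain ⟨R, hR⟩ := hA.exists_norm_le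
    exact ⟨max R 0, le_max_right R 0, fun x hx ↦ (hR x hx).trans (le_max_left R 0)⟩
  have hgain : 0 < τ / (1 + R) ^ 2 := by positivity
  refine ⟨1 - τ / (1 + R) ^ 2, by linarith, fun x hx y hy ↦ ?_⟩
  have hprod : (1 + ‖x‖) * (1 + ‖y‖) ≤ (1 + R) ^ 2 := by
    rw [sq]
    gcongr
    exacts [hR x hx, hR y hy]
  have hfactor : τ / (1 + R) ^ 2 ≤ τ / ((1 + ‖x‖) * (1 + ‖y‖)) :=
    div_le_div_of_nonneg_left hτ.le (by positivity) hprod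
  calc ‖G x - G y‖ ≤ ‖x - y‖ * (1 - τ / ((1 + ‖x‖) * (1 + ‖y‖))) := hG x y
    _ ≤ ‖x - y‖ * (1 - τ / (1 + R) ^ 2) := by gcongr
    _ = (1 - τ / (1 + R) ^ 2) * ‖x - y‖ := mul_comm _ _

end

theorem stmt16 (n : ℕ)
    (F : EuclideanSpace ℝ (Fin (n+1)) → EuclideanSpace ℝ (Fin (n+1)))
    (hF : LipschitzWith 1 F) (τ : ℝ) (hτ0 : 0 < τ) (hτ1 : τ < 1)
    (F' : EuclideanSpace ℝ (Fin (n+1)) → EuclideanSpace ℝ (Fin (n+1)))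
    (hdef : ∀ x, F' x = F ((1 - τ / (1 + ‖x‖)) • x)) :
    (∀ x y, ‖F' x - F' y‖ ≤ ‖x - y‖ * (1 - τ / ((1 + ‖x‖) * (1 + ‖y‖)))) ∧
    (∀ x, ‖F x - F' x‖ ≤ τ) ∧
    (∀ A : Set (EuclideanSpace ℝ (Fin (n+1))), Bornology.IsBounded A →
      ∃ L : ℝ, L < 1 ∧ ∀ x ∈ A, ∀ y ∈ A, ‖F' x - F' y‖ ≤ L * ‖x - y‖) := by
  have hF' : ∀ x, F' x = F (radialShrink τ x) := hdef
  have hFshort : ∀ u v, ‖F u - F v‖ ≤ ‖u - v‖ := by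
    simpa only [dist_eq_norm, NNReal.coe_one, one_mul] using hF.dist_le_mul
  have hcontract : ∀ x y, ‖F' x - F' y‖ ≤ ‖x - y‖ * (1 - τ / ((1 + ‖x‖) * (1 + ‖y‖))) :=
    fun x y ↦ by
      rw [hF', hF']
      exact (hFshort _ _).trans (norm_radialShrink_sub_radialShrink_le hτ0.le hτ1.le x y)
  refine ⟨hcontract, fun x ↦ ?_, fun A hA ↦ exists_lt_one_norm_sub_le_of_isBounded hτ0 hcontract hA⟩
  rw [hF']
  exact (hFshort _ _).trans (norm_sub_radialShrink_le hτ0.le x)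
end

section
/- Let (B, h) be either the ball B₂ ⊂ ℝⁿ or the half-ball B₂ ∩ {xₙ ≥ 0} equipped with a continuous Riemannian metric h, and fix β > 0. Then there exists r ∈ (0,1) such that for every p ∈ B̄₁ ∩ B there is a diffeomorphism Φ : B_r(p) → U onto a convex open set U ⊂ ℝⁿ with Φ* g₀ = h(p) (g₀ the Euclidean metric), Lip(Φ) ≤ 1+β with respect to (d_h, Euclidean), and Lip(Φ⁻¹) ≤ 1+β. -/
/-!
Take `L` with `L* L = G p`, a square root of `G p` built from an eigenbasis. On the compact set
`K = B̄_{3/2} ∩ B` the metric is uniformly continuous and uniformly comparable to the Euclidean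
one, `c ‖v‖² ≤ ⟪G x v, v⟫ ≤ C ‖v‖²`, so there is a `δ`, independent of `p`, such that `‖L v‖` and
`√⟪G x v, v⟫` agree up to the factor `1 + β` whenever `|x - p| ≤ δ`. Since `B` is convex, the
segment from `x` to `y` is admissible, which bounds `d_h(x, y)` from above by
`(1 + β) ‖L (x - y)‖`. From below, a curve that stays `δ`-close to `p` has length at least
`‖L (x - y)‖ / (1 + β)` by the fundamental theorem of calculus, while a curve that leaves the
`δ`-ball has length at least `√c (δ - r)`, which exceeds `‖L (x - y)‖ ≤ 2 √C r` once `r` is a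
small enough multiple of `δ`.
-/

open scoped RealInnerProductSpace

/-- The Riemannian length of a curve `γ : [0,1] → ℝⁿ` with respect to the metric
tensor `G`. -/
noncomputable def riemLen {n : ℕ}
    (G : EuclideanSpace ℝ (Fin n) → EuclideanSpace ℝ (Fin n) →L[ℝ] EuclideanSpace ℝ (Fin n))
    (γ : ℝ → EuclideanSpace ℝ (Fin n)) : ℝ :=
  ∫ t in (0:ℝ)..1, Real.sqrt ⟪G (γ t) (deriv γ t), deriv γ t⟫

/-- The intrinsic Riemannian distance in `B` induced by the metric tensor `G`:
the infimum of Riemannian lengths of `C¹` curves joining `x` to `y` inside `B`. -/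
noncomputable def riemDist {n : ℕ}
    (G : EuclideanSpace ℝ (Fin n) → EuclideanSpace ℝ (Fin n) →L[ℝ] EuclideanSpace ℝ (Fin n))
    (B : Set (EuclideanSpace ℝ (Fin n))) (x y : EuclideanSpace ℝ (Fin n)) : ℝ :=
  sInf {l : ℝ | ∃ γ : ℝ → EuclideanSpace ℝ (Fin n), ContDiff ℝ 1 γ ∧
    Set.MapsTo γ (Set.Icc 0 1) B ∧ γ 0 = x ∧ γ 1 = y ∧ l = riemLen G γ}

open Set Metric AffineMap

theorem sqrt_le_mul_sqrt_of_abs_sub_le {a b c n t : ℝ} (ht : 1 ≤ t) (hc : 0 ≤ c) (hn : 0 ≤ n)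
    (ha : c * n ≤ a) (hab : |b - a| ≤ c * (1 - (t ^ 2)⁻¹) * n) :
    √a ≤ t * √b ∧ √b ≤ t * √a := by
  have ht2 : 1 ≤ t ^ 2 := one_le_pow₀ ht
  have hε : t ^ 2 * (c * (1 - (t ^ 2)⁻¹) * n) = (t ^ 2 - 1) * (c * n) := by
    field_simp
  obtain ⟨hab₁, hab₂⟩ := abs_le.1 hab
  have ha0 : 0 ≤ a := (mul_nonneg hc hn).trans ha
  have h₁ : a ≤ t ^ 2 * b := by nlinarith
  have h₂ : b ≤ t ^ 2 * a := by nlinarith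
  rw [← Real.sqrt_sq (zero_le_one.trans ht), ← Real.sqrt_mul (sq_nonneg t),
    ← Real.sqrt_mul (sq_nonneg t)]
  exact ⟨Real.sqrt_le_sqrt h₁, Real.sqrt_le_sqrt h₂⟩

section InnerProductSpace

variable {E : Type*} [NormedAddCommGroup E] [InnerProductSpace ℝ E]

theorem abs_inner_apply_self_le (A : E →L[ℝ] E) (v : E) : |⟪A v, v⟫| ≤ ‖A‖ * ‖v‖ ^ 2 :=
  calc |⟪A v, v⟫| ≤ ‖A v‖ * ‖v‖ := abs_real_inner_le_norm _ _
    _ ≤ ‖A‖ * ‖v‖ * ‖v‖ := by gcongr; exact A.le_opNorm v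
    _ = ‖A‖ * ‖v‖ ^ 2 := by ring

theorem exists_continuousLinearEquiv_inner_map_map_eq [FiniteDimensional ℝ E] (T : E →L[ℝ] E)
    (hsym : ∀ v w, ⟪T v, w⟫ = ⟪v, T w⟫) (hpos : ∀ v, v ≠ 0 → 0 < ⟪T v, v⟫) :
    ∃ L : E ≃L[ℝ] E, ∀ v w, ⟪L v, L w⟫ = ⟪T v, w⟫ := by
  have hT : (T : E →ₗ[ℝ] E).IsPositive := (LinearMap.isPositive_iff _).2
    ⟨hsym, fun v => (eq_or_ne v 0).elim (fun hv => by simp [hv]) fun hv => (hpos v hv).le⟩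
  set b := hT.isSymmetric.eigenvectorBasis rfl
  set μ := hT.isSymmetric.eigenvalues rfl
  let S : E →ₗ[ℝ] E := b.repr.symm.toLinearEquiv.toLinearMap ∘ₗ
    (Matrix.diagonal fun i => √(μ i)).toEuclideanLin ∘ₗ b.repr.toLinearEquiv.toLinearMap
  have hS : ∀ v w, ⟪S v, S w⟫ = ⟪T v, w⟫ := by
    intro v w
    rw [← b.repr.inner_map_map (S v), ← b.repr.inner_map_map (T v), PiLp.inner_apply,
      PiLp.inner_apply]
    refine Finset.sum_congr rfl fun i _ => ?_
    simp only [S, LinearMap.comp_apply, LinearEquiv.coe_coe, LinearIsometryEquiv.coe_toLinearEquiv,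
      LinearIsometryEquiv.apply_symm_apply, Matrix.toLpLin_apply, Matrix.mulVec_diagonal,
      RCLike.inner_apply, conj_trivial]
    rw [show b.repr (T v) i = μ i * b.repr v i from
      hT.isSymmetric.eigenvectorBasis_apply_self_apply rfl v i]
    linear_combination (b.repr v i * b.repr w i) * Real.mul_self_sqrt (hT.nonneg_eigenvalues rfl i)
  have hinj : Function.Injective S := (injective_iff_map_eq_zero S).2 fun v hv =>
    by_contra fun hne => (hpos v hne).ne' (by rw [← hS, hv, inner_zero_left])
  exact ⟨(LinearEquiv.ofInjectiveEndo S hinj).toContinuousLinearEquiv, hS⟩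

theorem exists_pos_mul_norm_sq_le_inner [FiniteDimensional ℝ E] {X : Type*} [TopologicalSpace X]
    {K : Set X} (hK : IsCompact K) {G : X → E →L[ℝ] E} (hG : ContinuousOn G K)
    (hpos : ∀ x ∈ K, ∀ v, v ≠ 0 → 0 < ⟪G x v, v⟫) :
    ∃ c > 0, ∀ x ∈ K, ∀ v, c * ‖v‖ ^ 2 ≤ ⟪G x v, v⟫ := by
  have hcont : ContinuousOn (fun q : X × E => ⟪G q.1 q.2, q.2⟫) (K ×ˢ sphere 0 1) :=
    ((hG.comp continuousOn_fst fun q hq => hq.1).clm_apply continuousOn_snd).inner continuousOn_snd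
  obtain ⟨c, hc, hcK⟩ := (hK.prod (isCompact_sphere 0 1)).exists_forall_le' hcont
    fun q hq => hpos q.1 hq.1 q.2 (ne_zero_of_mem_sphere one_ne_zero ⟨q.2, hq.2⟩)
  refine ⟨c, hc, fun x hx v => ?_⟩
  rcases eq_or_ne v 0 with rfl | hv
  · simp
  have hv' : ‖v‖ ≠ 0 := norm_ne_zero_iff.2 hv
  have hu := hcK (x, ‖v‖⁻¹ • v) ⟨hx, by simp [norm_smul, hv']⟩
  have : ⟪G x (‖v‖⁻¹ • v), ‖v‖⁻¹ • v⟫ = ‖v‖⁻¹ ^ 2 * ⟪G x v, v⟫ := by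
    rw [map_smul, real_inner_smul_left, real_inner_smul_right]; ring
  rw [this] at hu
  calc c * ‖v‖ ^ 2 ≤ ‖v‖⁻¹ ^ 2 * ⟪G x v, v⟫ * ‖v‖ ^ 2 := by gcongr
    _ = ⟪G x v, v⟫ := by field_simp

theorem sqrt_inner_comparison_of_norm_sub_le {A A₀ : E →L[ℝ] E} {L : E → E} {c t : ℝ}
    (hL : ∀ v, ⟪L v, L v⟫ = ⟪A₀ v, v⟫) (hc : 0 ≤ c) (hA₀ : ∀ v, c * ‖v‖ ^ 2 ≤ ⟪A₀ v, v⟫)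
    (ht : 1 ≤ t) (hA : ‖A - A₀‖ ≤ c * (1 - (t ^ 2)⁻¹)) (v : E) :
    ‖L v‖ ≤ t * √⟪A v, v⟫ ∧ √⟪A v, v⟫ ≤ t * ‖L v‖ := by
  have hdiff : |⟪A v, v⟫ - ⟪A₀ v, v⟫| ≤ c * (1 - (t ^ 2)⁻¹) * ‖v‖ ^ 2 := by
    rw [← inner_sub_left, ← sub_apply]
    exact (abs_inner_apply_self_le _ v).trans (by gcongr)
  rw [norm_eq_sqrt_real_inner, hL]
  exact sqrt_le_mul_sqrt_of_abs_sub_le ht hc (sq_nonneg _) (hA₀ v) hdiff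

theorem norm_le_sqrt_mul_norm_of_inner_eq {A : E →L[ℝ] E} {L : E → E} {C : ℝ}
    (hL : ∀ v, ⟪L v, L v⟫ = ⟪A v, v⟫) (hA : ‖A‖ ≤ C) (v : E) : ‖L v‖ ≤ √C * ‖v‖ := by
  rw [norm_eq_sqrt_real_inner, hL, ← Real.sqrt_sq (norm_nonneg v),
    ← Real.sqrt_mul' _ (sq_nonneg _)]
  exact Real.sqrt_le_sqrt ((le_abs_self _).trans ((abs_inner_apply_self_le A v).trans (by gcongr)))

end InnerProductSpace

theorem exists_le_forall_Ico_lt {f : ℝ → ℝ} {a b δ : ℝ} (hf : ContinuousOn f (Icc a b))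
    (h : ∃ t ∈ Icc a b, δ ≤ f t) : ∃ t₁ ∈ Icc a b, δ ≤ f t₁ ∧ ∀ t ∈ Ico a t₁, f t < δ := by
  set S := Icc a b ∩ f ⁻¹' Ici δ
  have hS : IsClosed S := hf.preimage_isClosed_of_isClosed isClosed_Icc isClosed_Ici
  have hbdd : BddBelow S := ⟨a, fun t ht => ht.1.1⟩
  obtain ⟨ht₁, hδ⟩ : sInf S ∈ S := hS.csInf_mem h hbdd
  refine ⟨sInf S, ht₁, hδ, fun t ht => lt_of_not_ge fun hδt => ?_⟩
  exact ht.2.not_ge (csInf_le hbdd ⟨⟨ht.1, ht.2.le.trans ht₁.2⟩, hδt⟩)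

section Curves

variable {m : ℕ}
  {G : EuclideanSpace ℝ (Fin m) → EuclideanSpace ℝ (Fin m) →L[ℝ] EuclideanSpace ℝ (Fin m)}
  {B : Set (EuclideanSpace ℝ (Fin m))} {γ : ℝ → EuclideanSpace ℝ (Fin m)}
  {x y : EuclideanSpace ℝ (Fin m)}

theorem riemLen_nonneg : 0 ≤ riemLen G γ :=
  intervalIntegral.integral_nonneg zero_le_one fun _ _ => Real.sqrt_nonneg _

theorem continuousOn_riemLen_integrand (hG : ContinuousOn G B) (hγ : ContDiff ℝ 1 γ)
    (hγB : MapsTo γ (Icc 0 1) B) :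
    ContinuousOn (fun t => √⟪G (γ t) (deriv γ t), deriv γ t⟫) (Icc 0 1) := by
  have hγ' : Continuous (deriv γ) := hγ.continuous_deriv le_rfl
  exact (((hG.comp hγ.continuous.continuousOn hγB).clm_apply hγ'.continuousOn).inner
    hγ'.continuousOn).sqrt

theorem norm_map_sub_le_mul_riemLen (hG : ContinuousOn G B) (hγ : ContDiff ℝ 1 γ)
    (hγB : MapsTo γ (Icc 0 1) B)
    (A : EuclideanSpace ℝ (Fin m) →L[ℝ] EuclideanSpace ℝ (Fin m)) {a s : ℝ} (ha : 0 ≤ a)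
    (hs : s ∈ Icc (0:ℝ) 1)
    (h : ∀ t ∈ Ioo 0 s, ‖A (deriv γ t)‖ ≤ a * √⟪G (γ t) (deriv γ t), deriv γ t⟫) :
    ‖A (γ s) - A (γ 0)‖ ≤ a * riemLen G γ := by
  have hAγ' : Continuous fun t => A (deriv γ t) := A.continuous.comp (hγ.continuous_deriv le_rfl)
  have hint : IntervalIntegrable (fun t => √⟪G (γ t) (deriv γ t), deriv γ t⟫)
      MeasureTheory.volume 0 1 :=
    (continuousOn_riemLen_integrand hG hγ hγB).intervalIntegrable_of_Icc zero_le_one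
  have hFTC : ∫ t in (0:ℝ)..s, A (deriv γ t) = A (γ s) - A (γ 0) :=
    intervalIntegral.integral_eq_sub_of_hasDerivAt
      (fun t _ => A.hasFDerivAt.comp_hasDerivAt t (hγ.differentiable one_ne_zero t).hasDerivAt)
      (hAγ'.intervalIntegrable 0 s)
  rw [← hFTC, riemLen, ← intervalIntegral.integral_const_mul]
  calc ‖∫ t in (0:ℝ)..s, A (deriv γ t)‖
      ≤ ∫ t in (0:ℝ)..s, ‖A (deriv γ t)‖ := intervalIntegral.norm_integral_le_integral_norm hs.1
    _ ≤ ∫ t in (0:ℝ)..s, a * √⟪G (γ t) (deriv γ t), deriv γ t⟫ :=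
        intervalIntegral.integral_mono_on_of_le_Ioo hs.1 (hAγ'.norm.intervalIntegrable 0 s)
          ((hint.mono_set (by simp [uIcc_of_le, hs.1, hs.2, Icc_subset_Icc])).const_mul a) h
    _ ≤ ∫ t in (0:ℝ)..1, a * √⟪G (γ t) (deriv γ t), deriv γ t⟫ :=
        intervalIntegral.integral_mono_interval le_rfl hs.1 hs.2
          (Filter.Eventually.of_forall fun t => by positivity) (hint.const_mul a)

theorem riemLen_lineMap_le {S : Set (EuclideanSpace ℝ (Fin m))} (hS : Convex ℝ S) (hx : x ∈ S)
    (hy : y ∈ S) {M : ℝ} (hM : ∀ z ∈ S, √⟪G z (y - x), y - x⟫ ≤ M) :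
    riemLen G (lineMap x y) ≤ M := by
  have hderiv : ∀ t, deriv (lineMap x y : ℝ → _) t = y - x := fun t => hasDerivAt_lineMap.deriv
  have hbound : ∀ t ∈ uIoc (0:ℝ) 1, ‖√⟪G (lineMap x y t) (deriv (lineMap x y : ℝ → _) t),
      deriv (lineMap x y : ℝ → _) t⟫‖ ≤ M := fun t ht => by
    rw [Real.norm_of_nonneg (Real.sqrt_nonneg _), hderiv]
    exact hM _ (hS.lineMap_mem hx hy (Ioc_subset_Icc_self (by rwa [uIoc_of_le zero_le_one] at ht)))
  have := (le_abs_self _).trans (intervalIntegral.norm_integral_le_of_norm_le_const hbound)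
  rwa [sub_zero, abs_one, mul_one] at this

theorem riemDist_le_riemLen (hγ : ContDiff ℝ 1 γ) (hγB : MapsTo γ (Icc 0 1) B) (h0 : γ 0 = x)
    (h1 : γ 1 = y) : riemDist G B x y ≤ riemLen G γ :=
  csInf_le ⟨0, fun _ ⟨_, _, _, _, _, hl⟩ => hl ▸ riemLen_nonneg⟩ ⟨γ, hγ, hγB, h0, h1, rfl⟩

theorem riemDist_le_of_convex {S : Set (EuclideanSpace ℝ (Fin m))} (hS : Convex ℝ S)
    (hSB : S ⊆ B) (hx : x ∈ S) (hy : y ∈ S) {M : ℝ} (hM : ∀ z ∈ S, √⟪G z (y - x), y - x⟫ ≤ M) :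
    riemDist G B x y ≤ M :=
  (riemDist_le_riemLen (contDiff_lineMap x y) ((hS.mapsTo_lineMap hx hy).mono_right hSB)
    (lineMap_apply_zero x y) (lineMap_apply_one x y)).trans (riemLen_lineMap_le hS hx hy hM)

theorem le_riemDist {S : Set (EuclideanSpace ℝ (Fin m))} (hS : Convex ℝ S) (hSB : S ⊆ B)
    (hx : x ∈ S) (hy : y ∈ S) {l : ℝ}
    (h : ∀ γ, ContDiff ℝ 1 γ → MapsTo γ (Icc 0 1) B → γ 0 = x → γ 1 = y → l ≤ riemLen G γ) :
    l ≤ riemDist G B x y :=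
  le_csInf ⟨_, lineMap x y, contDiff_lineMap x y, (hS.mapsTo_lineMap hx hy).mono_right hSB,
    lineMap_apply_zero x y, lineMap_apply_one x y, rfl⟩ fun _ ⟨γ, hγ, hγB, h0, h1, hl⟩ =>
    hl ▸ h γ hγ hγB h0 h1

theorem sqrt_mul_sub_dist_le_riemLen (hG : ContinuousOn G B) (hγ : ContDiff ℝ 1 γ)
    (hγB : MapsTo γ (Icc 0 1) B) {p : EuclideanSpace ℝ (Fin m)} {c δ : ℝ} (hc : 0 < c)
    (hlow : ∀ z ∈ closedBall p δ ∩ B, ∀ v, c * ‖v‖ ^ 2 ≤ ⟪G z v, v⟫)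
    (hexit : ∃ t ∈ Icc 0 1, δ ≤ dist (γ t) p) :
    √c * (δ - dist (γ 0) p) ≤ riemLen G γ := by
  obtain ⟨t₁, ht₁, hδ, hin⟩ :=
    exists_le_forall_Ico_lt (hγ.continuous.dist continuous_const).continuousOn hexit
  have hpt : ∀ t ∈ Ioo 0 t₁, ‖ContinuousLinearMap.id ℝ _ (deriv γ t)‖ ≤
      (√c)⁻¹ * √⟪G (γ t) (deriv γ t), deriv γ t⟫ := fun t ht => by
    have hz : γ t ∈ closedBall p δ ∩ B :=
      ⟨(hin t (Ioo_subset_Ico_self ht)).le, hγB ⟨ht.1.le, ht.2.le.trans ht₁.2⟩⟩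
    rw [ContinuousLinearMap.id_apply, le_inv_mul_iff₀ (Real.sqrt_pos.2 hc),
      ← Real.sqrt_sq (norm_nonneg _), ← Real.sqrt_mul hc.le]
    exact Real.sqrt_le_sqrt (hlow _ hz _)
  have h := norm_map_sub_le_mul_riemLen hG hγ hγB _ (inv_nonneg.2 (Real.sqrt_nonneg c)) ht₁ hpt
  rw [ContinuousLinearMap.id_apply, ContinuousLinearMap.id_apply, ← dist_eq_norm,
    le_inv_mul_iff₀ (Real.sqrt_pos.2 hc)] at h
  refine le_trans ?_ h
  gcongr
  linarith [dist_triangle (γ t₁) (γ 0) p]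

end Curves

section Charts

variable {m : ℕ}
  {G : EuclideanSpace ℝ (Fin m) → EuclideanSpace ℝ (Fin m) →L[ℝ] EuclideanSpace ℝ (Fin m)}
  {B : Set (EuclideanSpace ℝ (Fin m))} {p : EuclideanSpace ℝ (Fin m)}
  {c t M δ r : ℝ}

theorem norm_map_sub_le_mul_riemDist
    {L : EuclideanSpace ℝ (Fin m) ≃L[ℝ] EuclideanSpace ℝ (Fin m)} (hG : ContinuousOn G B)
    (hB : Convex ℝ B) (hc : 0 < c) (ht : 1 ≤ t) (hM : 0 ≤ M) (hr : 2 * M * r ≤ √c * (δ - r))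
    (hlow : ∀ z ∈ closedBall p δ ∩ B, ∀ v, c * ‖v‖ ^ 2 ≤ ⟪G z v, v⟫)
    (hcmp : ∀ z ∈ closedBall p δ ∩ B, ∀ v, ‖L v‖ ≤ t * √⟪G z v, v⟫)
    (hLM : ∀ v, ‖L v‖ ≤ M * ‖v‖) {x y : EuclideanSpace ℝ (Fin m)} (hx : x ∈ ball p r ∩ B)
    (hy : y ∈ ball p r ∩ B) : ‖L x - L y‖ ≤ t * riemDist G B x y := by
  have ht0 : 0 < t := by linarith
  rw [← div_le_iff₀' ht0]
  refine le_riemDist ((convex_ball p r).inter hB) inter_subset_right hx hy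
    fun γ hγ hγB h0 h1 => (div_le_iff₀' ht0).2 ?_
  by_cases hexit : ∃ s ∈ Icc 0 1, δ ≤ dist (γ s) p
  · have hxp : dist x p < r := hx.1
    have hxy : ‖x - y‖ < 2 * r := by
      rw [← dist_eq_norm]; linarith [dist_triangle_right x y p, mem_ball.1 hy.1]
    have hlen := sqrt_mul_sub_dist_le_riemLen hG hγ hγB hc hlow hexit
    rw [h0] at hlen
    calc ‖L x - L y‖ = ‖L (x - y)‖ := by rw [map_sub]
      _ ≤ M * ‖x - y‖ := hLM _
      _ ≤ 2 * M * r := by nlinarith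
      _ ≤ √c * (δ - dist x p) := hr.trans (by gcongr)
      _ ≤ riemLen G γ := hlen
      _ ≤ t * riemLen G γ := le_mul_of_one_le_left riemLen_nonneg ht
  · push Not at hexit
    have h := norm_map_sub_le_mul_riemLen hG hγ hγB L ht0.le (right_mem_Icc.2 zero_le_one)
      fun s hs => by
        rw [ContinuousLinearEquiv.coe_coe]
        exact hcmp _ ⟨(hexit s (Ioo_subset_Icc_self hs)).le, hγB (Ioo_subset_Icc_self hs)⟩ _
    rwa [ContinuousLinearEquiv.coe_coe, h0, h1, norm_sub_rev] at h

theorem bilipschitz_chart_of_local_bounds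
    {L : EuclideanSpace ℝ (Fin m) ≃L[ℝ] EuclideanSpace ℝ (Fin m)} (hG : ContinuousOn G B)
    (hB : Convex ℝ B) (hc : 0 < c) (ht : 1 ≤ t) (hM : 0 ≤ M) (hrδ : r ≤ δ)
    (hr : 2 * M * r ≤ √c * (δ - r))
    (hlow : ∀ z ∈ closedBall p δ ∩ B, ∀ v, c * ‖v‖ ^ 2 ≤ ⟪G z v, v⟫)
    (hcmp : ∀ z ∈ closedBall p δ ∩ B, ∀ v, ‖L v‖ ≤ t * √⟪G z v, v⟫ ∧ √⟪G z v, v⟫ ≤ t * ‖L v‖)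
    (hLM : ∀ v, ‖L v‖ ≤ M * ‖v‖) :
    Convex ℝ ((fun z => L (z - p)) '' (ball p r ∩ B)) ∧
      (∀ x ∈ ball p r ∩ B, ∀ y ∈ ball p r ∩ B,
        ‖L (x - p) - L (y - p)‖ ≤ t * riemDist G B x y) ∧
      (∀ z ∈ (fun z => L (z - p)) '' (ball p r ∩ B),
        ∀ w ∈ (fun z => L (z - p)) '' (ball p r ∩ B),
          riemDist G B (L.symm z + p) (L.symm w + p) ≤ t * ‖z - w‖) := by
  have hS : Convex ℝ (ball p r ∩ B) := (convex_ball p r).inter hB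
  have hSδ : ball p r ∩ B ⊆ closedBall p δ ∩ B :=
    inter_subset_inter_left B ((ball_subset_closedBall).trans (closedBall_subset_closedBall hrδ))
  refine ⟨?_, fun x hx y hy => ?_, ?_⟩
  · simpa only [image_image, ← sub_eq_neg_add, ContinuousLinearEquiv.coe_toLinearEquiv,
      LinearEquiv.coe_coe] using (hS.translate (-p)).linear_image L.toLinearEquiv.toLinearMap
  · rw [← map_sub, sub_sub_sub_cancel_right, map_sub]
    exact norm_map_sub_le_mul_riemDist hG hB hc ht hM hr hlow
      (fun z hz v => (hcmp z hz v).1) hLM hx hy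
  · rintro _ ⟨x, hx, rfl⟩ _ ⟨y, hy, rfl⟩
    simp only [ContinuousLinearEquiv.symm_apply_apply, sub_add_cancel]
    refine riemDist_le_of_convex hS inter_subset_right hx hy fun z hz => ?_
    rw [← map_sub, sub_sub_sub_cancel_right, ← norm_neg, ← map_neg, neg_sub]
    exact (hcmp z (hSδ hz) _).2

end Charts

theorem exists_radius_bilipschitz_charts {m : ℕ} {B K P : Set (EuclideanSpace ℝ (Fin m))}
    (hB : Convex ℝ B) (hK : IsCompact K) (hKB : K ⊆ B) (hPB : P ⊆ B) {ρ : ℝ} (hρ : 0 < ρ)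
    (hPK : ∀ p ∈ P, closedBall p ρ ∩ B ⊆ K)
    {G : EuclideanSpace ℝ (Fin m) → EuclideanSpace ℝ (Fin m) →L[ℝ] EuclideanSpace ℝ (Fin m)}
    (hcont : ContinuousOn G B) (hsym : ∀ x ∈ B, ∀ v w, ⟪G x v, w⟫ = ⟪v, G x w⟫)
    (hpos : ∀ x ∈ B, ∀ v, v ≠ 0 → 0 < ⟪G x v, v⟫) {β : ℝ} (hβ : 0 < β) :
    ∃ r ∈ Ioo (0:ℝ) 1, ∀ p ∈ P,
      ∃ L : EuclideanSpace ℝ (Fin m) ≃L[ℝ] EuclideanSpace ℝ (Fin m),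
        Convex ℝ ((fun z => L (z - p)) '' (ball p r ∩ B)) ∧
        (∀ v w, ⟪L v, L w⟫ = ⟪G p v, w⟫) ∧
        (∀ x ∈ ball p r ∩ B, ∀ y ∈ ball p r ∩ B,
          ‖L (x - p) - L (y - p)‖ ≤ (1 + β) * riemDist G B x y) ∧
        (∀ z ∈ (fun z => L (z - p)) '' (ball p r ∩ B),
          ∀ w ∈ (fun z => L (z - p)) '' (ball p r ∩ B),
            riemDist G B (L.symm z + p) (L.symm w + p) ≤ (1 + β) * ‖z - w‖) := by
  have hGK := hcont.mono hKB
  obtain ⟨c, hc, hlow⟩ := exists_pos_mul_norm_sq_le_inner hK hGK fun x hx => hpos x (hKB hx)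
  obtain ⟨C, hC⟩ := hK.exists_bound_of_continuousOn hGK
  have hε : 0 < c * (1 - ((1 + β) ^ 2)⁻¹) :=
    mul_pos hc (sub_pos.2 (inv_lt_one_of_one_lt₀ (by nlinarith)))
  obtain ⟨δ₀, hδ₀, hδG⟩ :=
    Metric.uniformContinuousOn_iff.1 (hK.uniformContinuousOn_of_continuous hGK) _ hε
  set δ := min (δ₀ / 2) (min ρ 1)
  have hδ : 0 < δ := lt_min (half_pos hδ₀) (lt_min hρ one_pos)
  set r := √c * δ / (2 * √C + 2 * √c)
  have hrdef : r * (2 * √C + 2 * √c) = √c * δ := div_mul_cancel₀ _ (by positivity)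
  have hr : 0 < r := by positivity
  have hr_half : r ≤ δ / 2 := by nlinarith [Real.sqrt_nonneg C, Real.sqrt_pos.2 hc]
  refine ⟨r, ⟨hr, by linarith [min_le_right (δ₀ / 2) (min ρ 1), min_le_right ρ 1]⟩,
    fun p hp => ?_⟩
  obtain ⟨L, hL⟩ := exists_continuousLinearEquiv_inner_map_map_eq (G p) (hsym p (hPB hp))
    (hpos p (hPB hp))
  have hpK : p ∈ K := hPK p hp ⟨mem_closedBall_self hρ.le, hPB hp⟩
  have hδK : closedBall p δ ∩ B ⊆ K := (inter_subset_inter_left B (closedBall_subset_closedBall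
    ((min_le_right _ _).trans (min_le_left _ _)))).trans (hPK p hp)
  have hcmp : ∀ z ∈ closedBall p δ ∩ B, ∀ v,
      ‖L v‖ ≤ (1 + β) * √⟪G z v, v⟫ ∧ √⟪G z v, v⟫ ≤ (1 + β) * ‖L v‖ := fun z hz =>
    sqrt_inner_comparison_of_norm_sub_le (fun v => hL v v) hc.le (hlow p hpK) (by linarith)
      (by simpa only [dist_eq_norm] using (hδG z (hδK hz) p hpK
        ((mem_closedBall.1 hz.1).trans_lt ((min_le_left _ _).trans_lt (half_lt_self hδ₀)))).le)
  have hrδ : r ≤ δ := by linarith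
  have hrC : 2 * √C * r ≤ √c * (δ - r) := by nlinarith [Real.sqrt_pos.2 hc]
  obtain ⟨hconv, hlip, hlip'⟩ := bilipschitz_chart_of_local_bounds hcont hB hc (by linarith)
    (Real.sqrt_nonneg C) hrδ hrC (fun z hz => hlow z (hδK hz)) hcmp
    (norm_le_sqrt_mul_norm_of_inner_eq (fun v => hL v v) (hC p hpK))
  exact ⟨L, hconv, hL, hlip, hlip'⟩

theorem stmt17 (n : ℕ) (i : Fin (n+1)) (B : Set (EuclideanSpace ℝ (Fin (n+1))))
    (hB : B = Metric.ball (0 : EuclideanSpace ℝ (Fin (n+1))) 2 ∨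
      B = Metric.ball (0 : EuclideanSpace ℝ (Fin (n+1))) 2 ∩ {x | 0 ≤ x i})
    (G : EuclideanSpace ℝ (Fin (n+1)) →
      EuclideanSpace ℝ (Fin (n+1)) →L[ℝ] EuclideanSpace ℝ (Fin (n+1)))
    (hcont : ContinuousOn G B)
    (hsym : ∀ x ∈ B, ∀ v w, ⟪G x v, w⟫ = ⟪v, G x w⟫)
    (hpos : ∀ x ∈ B, ∀ v, v ≠ 0 → 0 < ⟪G x v, v⟫)
    (β : ℝ) (hβ : 0 < β) :
    ∃ r ∈ Set.Ioo (0:ℝ) 1,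
      ∀ p ∈ Metric.closedBall (0 : EuclideanSpace ℝ (Fin (n+1))) 1 ∩ B,
        ∃ L : EuclideanSpace ℝ (Fin (n+1)) ≃L[ℝ] EuclideanSpace ℝ (Fin (n+1)),
          Convex ℝ ((fun z => L (z - p)) '' (Metric.ball p r ∩ B)) ∧
          (∀ v w, ⟪L v, L w⟫ = ⟪G p v, w⟫) ∧
          (∀ x ∈ Metric.ball p r ∩ B, ∀ y ∈ Metric.ball p r ∩ B,
            ‖L (x - p) - L (y - p)‖ ≤ (1 + β) * riemDist G B x y) ∧
          (∀ z ∈ (fun z => L (z - p)) '' (Metric.ball p r ∩ B),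
            ∀ w ∈ (fun z => L (z - p)) '' (Metric.ball p r ∩ B),
              riemDist G B (L.symm z + p) (L.symm w + p) ≤ (1 + β) * ‖z - w‖) := by
  obtain ⟨H, hHclosed, hHconv, rfl⟩ :
      ∃ H : Set (EuclideanSpace ℝ (Fin (n+1))), IsClosed H ∧ Convex ℝ H ∧ B = ball 0 2 ∩ H := by
    rcases hB with rfl | rfl
    · exact ⟨univ, isClosed_univ, convex_univ, (inter_univ _).symm⟩
    · exact ⟨{x | 0 ≤ x i}, isClosed_le continuous_const (EuclideanSpace.proj i).continuous,
        convex_halfSpace_ge (f := fun x : EuclideanSpace ℝ (Fin (n+1)) => x i)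
          (EuclideanSpace.proj i).toLinearMap.isLinear 0, rfl⟩
  have hK : closedBall 0 (3 / 2) ∩ (ball 0 2 ∩ H) = closedBall 0 (3 / 2) ∩ H := by
    rw [← inter_assoc, inter_eq_left.2 (closedBall_subset_ball (by norm_num))]
  refine exists_radius_bilipschitz_charts ((convex_ball 0 2).inter hHconv)
    (hK ▸ (isCompact_closedBall 0 _).inter_right hHclosed) inter_subset_right inter_subset_right
    one_half_pos (fun p hp z hz => ⟨?_, hz.2⟩) hcont hsym hpos hβ
  rw [mem_closedBall_zero_iff]
  linarith [norm_le_norm_add_norm_sub' z p, mem_closedBall_iff_norm.1 hz.1,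
    mem_closedBall_zero_iff.1 hp.1]
end
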